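/- arXiv:2009.07617 — 3 statements merged into one kernel-verified Lean document; each statement's English description precedes it below -/
import Mathlib

section
/- Let p be an odd prime and let λ = (3^{3p-2}) be the partition of n = 3(3p-2) with 3p-2 parts equal to 3. Then ν_p(λ) ≥ 4; equivalently, p^4 divides ⟨e_s, e_t⟩ for every pair (s,t) of row-equivalent (3^{3p-2})-tableaux. -/
/-- `lam` is a partition of `n`: weakly decreasing, eventually zero, with parts summing to `n`.
Parts are indexed from `0`, so `lam 0` is the largest part. -/
def IsPartitionOf (n : ℕ) (lam : ℕ → ℕ) : Prop :=
  Antitone lam ∧ ∃ N : ℕ, (∀ i, N ≤ i → lam i = 0) ∧ ∑ i ∈ Finset.range N, lam i = n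

/-- A `lam`-tableau with entries `Fin n`: a bijection between entries and the cells
`(row, col)` of the Young diagram of `lam` (rows and columns indexed from `0`). -/
structure YTableau (n : ℕ) (lam : ℕ → ℕ) where
  pos : Fin n → ℕ × ℕ
  inj : Function.Injective pos
  mem : ∀ k, (pos k).2 < lam (pos k).1
  surj : ∀ c : ℕ × ℕ, c.2 < lam c.1 → ∃ k, pos k = c

/-- Two tableaux are row equivalent when every entry lies in the same row in both. -/
def RowEquiv {n : ℕ} {lam : ℕ → ℕ} (s t : YTableau n lam) : Prop :=
  ∀ k, (s.pos k).1 = (t.pos k).1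

/-- The column stabiliser of a tableau: permutations of the entries preserving each column. -/
def colStab {n : ℕ} {lam : ℕ → ℕ} (t : YTableau n lam) : Finset (Equiv.Perm (Fin n)) :=
  Finset.univ.filter fun σ => ∀ k, (t.pos (σ k)).2 = (t.pos k).2

/-- The polytabloid `e_t`, an element of the free ℤ-module on tabloids.  A tabloid is recorded
as the function sending each entry to its row. -/
noncomputable def polytabloid {n : ℕ} {lam : ℕ → ℕ} (t : YTableau n lam) :
    (Fin n → ℕ) →₀ ℤ :=
  ∑ σ ∈ colStab t,
    ((Equiv.Perm.sign σ : ℤˣ) : ℤ) • Finsupp.single (fun k => (t.pos (σ⁻¹ k)).1) 1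

/-- The bilinear form on the free ℤ-module on tabloids making the tabloids orthonormal. -/
def tabloidInner {n : ℕ} (f g : (Fin n → ℕ) →₀ ℤ) : ℤ :=
  f.sum fun x a => a * g x

/-- The `p`-Schaper number of `lam`: the largest `k` such that `p^k` divides
`⟨e_s, e_t⟩` for all pairs `(s, t)` of row-equivalent `lam`-tableaux. -/
noncomputable def schaperNumber (p n : ℕ) (lam : ℕ → ℕ) : ℕ :=
  sSup {k : ℕ | ∀ s t : YTableau n lam, RowEquiv s t →
    (p : ℤ) ^ k ∣ tabloidInner (polytabloid s) (polytabloid t)}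

theorem Equiv.Perm.apply_inv_self {α : Type*} (f : Equiv.Perm α) (x : α) : f (f⁻¹ x) = x :=
  f.apply_symm_apply x

theorem Equiv.Perm.inv_apply_self {α : Type*} (f : Equiv.Perm α) (x : α) : f⁻¹ (f x) = x :=
  f.symm_apply_apply x

namespace SchaperAux
open Equiv Finset

set_option linter.unusedSectionVars false
variable {α β : Type*} [Fintype α] [DecidableEq α] [DecidableEq β]

private lemma eval_fwd {F G : α → β} (e : ∀ b, {k // G k = b} ≃ {k // F k = b})
    {y : α} {b : β} (hy : G y = b) : ((e (G y)) ⟨y, rfl⟩).1 = ((e b) ⟨y, hy⟩).1 := by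
  subst hy; rfl

private lemma eval_bwd {F G : α → β} (e : ∀ b, {k // G k = b} ≃ {k // F k = b})
    {y : α} {b : β} (hy : F y = b) : ((e (F y)).symm ⟨y, rfl⟩).1 = ((e b).symm ⟨y, hy⟩).1 := by
  subst hy; rfl

/-- The fiberwise decomposition of the set of permutations `τ` with `F ∘ τ = G`. -/
def permRestrictEquiv (F G : α → β) :
    {τ : Equiv.Perm α // ∀ k, F (τ k) = G k} ≃ ∀ b, ({k // G k = b} ≃ {k // F k = b}) where
  toFun τ b :=
    { toFun := fun k => ⟨τ.1 k.1, by rw [τ.2 k.1, k.2]⟩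
      invFun := fun k => ⟨τ.1⁻¹ k.1, by
        have h := τ.2 (τ.1⁻¹ k.1)
        rw [Equiv.Perm.apply_inv_self] at h
        rw [← h, k.2]⟩
      left_inv := fun k => Subtype.ext (by simp)
      right_inv := fun k => Subtype.ext (by simp) }
  invFun e :=
    ⟨{ toFun := fun k => (e (G k) ⟨k, rfl⟩).1
       invFun := fun k => ((e (F k)).symm ⟨k, rfl⟩).1
       left_inv := by
         intro k
         dsimp only
         have h1 : F ((e (G k) ⟨k, rfl⟩).1) = G k := (e (G k) ⟨k, rfl⟩).2
         rw [eval_bwd e h1]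
         have h2 : (⟨(e (G k) ⟨k, rfl⟩).1, h1⟩ : {k' // F k' = G k}) = e (G k) ⟨k, rfl⟩ :=
           Subtype.ext rfl
         rw [h2, Equiv.symm_apply_apply]
       right_inv := by
         intro k
         dsimp only
         have h1 : G (((e (F k)).symm ⟨k, rfl⟩).1) = F k := ((e (F k)).symm ⟨k, rfl⟩).2
         rw [eval_fwd e h1]
         have h2 : (⟨((e (F k)).symm ⟨k, rfl⟩).1, h1⟩ : {k' // G k' = F k})
             = (e (F k)).symm ⟨k, rfl⟩ := Subtype.ext rfl
         rw [h2, Equiv.apply_symm_apply] },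
     fun k => (e (G k) ⟨k, rfl⟩).2⟩
  left_inv := by
    intro τ
    apply Subtype.ext
    apply Equiv.ext
    intro k
    rfl
  right_inv := by
    intro e
    funext b
    apply Equiv.ext
    intro x
    apply Subtype.ext
    show (e (G x.1) ⟨x.1, rfl⟩).1 = (e b x).1
    rw [eval_fwd e x.2]

lemma nonempty_perm_comp {F G : α → β}
    (h : ∀ b, Fintype.card {k // F k = b} = Fintype.card {k // G k = b}) :
    Nonempty {τ : Equiv.Perm α // ∀ k, F (τ k) = G k} :=
  ⟨(permRestrictEquiv F G).symm fun b => Fintype.equivOfCardEq ((h b).symm)⟩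

lemma cards_of_perm_comp {F G : α → β} (τ : Equiv.Perm α) (hτ : ∀ k, F (τ k) = G k) :
    ∀ b, Fintype.card {k // F k = b} = Fintype.card {k // G k = b} := fun b =>
  (Fintype.card_congr (permRestrictEquiv F G ⟨τ, hτ⟩ b)).symm

lemma card_perm_comp [Fintype β] {F G : α → β} (τ₀ : Equiv.Perm α)
    (hτ₀ : ∀ k, F (τ₀ k) = G k) :
    Fintype.card {τ : Equiv.Perm α // ∀ k, F (τ k) = G k}
      = ∏ b : β, Nat.factorial (Fintype.card {k // F k = b}) := by
  rw [Fintype.card_congr (permRestrictEquiv F G), Fintype.card_pi]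
  refine Finset.prod_congr rfl fun b _ => ?_
  rw [Fintype.card_equiv (permRestrictEquiv F G ⟨τ₀, hτ₀⟩ b),
    ← cards_of_perm_comp τ₀ hτ₀ b]

lemma card_subtype_perm_comp [Fintype β] (F G : α → β) :
    Fintype.card {τ : Equiv.Perm α // ∀ k, F (τ k) = G k}
      = if ∀ b, Fintype.card {k // F k = b} = Fintype.card {k // G k = b}
        then ∏ b : β, Nat.factorial (Fintype.card {k // F k = b}) else 0 := by
  split_ifs with h
  · obtain ⟨⟨τ₀, hτ₀⟩⟩ := nonempty_perm_comp h
    exact card_perm_comp τ₀ hτ₀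
  · rw [Fintype.card_eq_zero_iff]
    exact ⟨fun τ => h (cards_of_perm_comp τ.1 τ.2)⟩

lemma filter_card_perm_comp [Fintype β] (F G : α → β) :
    ((Finset.univ : Finset (Equiv.Perm α)).filter fun τ => ∀ k, F (τ k) = G k).card
      = if ∀ b, Fintype.card {k // F k = b} = Fintype.card {k // G k = b}
        then ∏ b : β, Nat.factorial (Fintype.card {k // F k = b}) else 0 := by
  rw [← Fintype.card_subtype]
  split_ifs with h
  · obtain ⟨⟨τ₀, hτ₀⟩⟩ := nonempty_perm_comp h
    exact card_perm_comp τ₀ hτ₀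
  · rw [Fintype.card_eq_zero_iff]
    exact ⟨fun τ => h (cards_of_perm_comp τ.1 τ.2)⟩

lemma card_filter_eq_of_perm_comp [Fintype β] (F G : α → β)
    {P : Equiv.Perm α → Prop} [DecidablePred P] (hP : ∀ τ, P τ ↔ ∀ k, F (τ k) = G k) :
    ((Finset.univ : Finset (Equiv.Perm α)).filter P).card
      = if ∀ b, Fintype.card {k // F k = b} = Fintype.card {k // G k = b}
        then ∏ b : β, Nat.factorial (Fintype.card {k // F k = b}) else 0 := by
  rw [Finset.filter_congr (fun τ _ => hP τ)]
  exact filter_card_perm_comp F G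

end SchaperAux

namespace SchaperAux
open Equiv Finset

noncomputable def sgn {n : ℕ} (σ : Equiv.Perm (Fin n)) : ℤ := ((Equiv.Perm.sign σ : ℤˣ) : ℤ)

lemma sgn_mul {n : ℕ} (σ τ : Equiv.Perm (Fin n)) : sgn (σ * τ) = sgn σ * sgn τ := by
  simp [sgn, map_mul]

lemma sgn_sq {n : ℕ} (τ : Equiv.Perm (Fin n)) : sgn τ * sgn τ = 1 := by
  rw [sgn, ← Units.val_mul, Int.units_mul_self, Units.val_one]

variable {n : ℕ} {lam : ℕ → ℕ}

lemma inner_expand (s t : YTableau n lam) :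
    tabloidInner (polytabloid s) (polytabloid t)
      = ∑ σ ∈ colStab s, ∑ τ ∈ colStab t, sgn σ * sgn τ *
          (if (fun k => (s.pos (σ⁻¹ k)).1) = (fun k => (t.pos (τ⁻¹ k)).1) then 1 else 0) := by
  have h1 : tabloidInner (polytabloid s) (polytabloid t)
      = Finsupp.linearCombination ℤ (fun x : Fin n → ℕ => polytabloid t x) (polytabloid s) := by
    rw [Finsupp.linearCombination_apply, tabloidInner]
    simp only [smul_eq_mul]
  rw [h1]
  rw [show polytabloid s = ∑ σ ∈ colStab s,
      ((Equiv.Perm.sign σ : ℤˣ) : ℤ) • Finsupp.single (fun k => (s.pos (σ⁻¹ k)).1) (1:ℤ)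
    from rfl, map_sum]
  refine Finset.sum_congr rfl fun σ hσ => ?_
  rw [map_smul, Finsupp.linearCombination_single, one_smul, smul_eq_mul]
  rw [show (polytabloid t) (fun k => (s.pos (σ⁻¹ k)).1)
      = ∑ τ ∈ colStab t, ((Equiv.Perm.sign τ : ℤˣ) : ℤ) *
          (if (fun k => (t.pos (τ⁻¹ k)).1) = (fun k => (s.pos (σ⁻¹ k)).1) then (1:ℤ) else 0)
    from by
      rw [polytabloid, Finsupp.finset_sum_apply]
      refine Finset.sum_congr rfl fun τ hτ => ?_
      rw [Finsupp.smul_apply, Finsupp.single_apply, smul_eq_mul]]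
  rw [Finset.mul_sum]
  refine Finset.sum_congr rfl fun τ hτ => ?_
  rw [← mul_assoc]
  simp only [sgn]
  congr 1
  exact if_congr eq_comm rfl rfl

lemma cond_iff (s t : YTableau n lam) (hst : RowEquiv s t) (τ ρ : Equiv.Perm (Fin n)) :
    ((fun k => (s.pos ((τ * ρ)⁻¹ k)).1) = fun k => (t.pos (τ⁻¹ k)).1)
      ↔ ∀ k, (s.pos (ρ k)).1 = (s.pos k).1 := by
  constructor
  · intro h k
    have h2 := congrFun h (τ (ρ k))
    simp only [mul_inv_rev, Equiv.Perm.mul_apply, Equiv.Perm.inv_apply_self] at h2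
    rw [← hst (ρ k)] at h2
    exact h2.symm
  · intro h
    funext k
    have h2 : ∀ j, (s.pos (ρ⁻¹ j)).1 = (s.pos j).1 := by
      intro j
      have h3 := h (ρ⁻¹ j)
      rw [Equiv.Perm.apply_inv_self] at h3
      exact h3.symm
    simp only [mul_inv_rev, Equiv.Perm.mul_apply]
    rw [h2 (τ⁻¹ k), hst (τ⁻¹ k)]

lemma inner_eq_rho_sum (s t : YTableau n lam) (hst : RowEquiv s t) :
    tabloidInner (polytabloid s) (polytabloid t)
      = ∑ ρ ∈ (Finset.univ : Finset (Equiv.Perm (Fin n))).filter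
            (fun ρ => ∀ k, (s.pos (ρ k)).1 = (s.pos k).1),
          sgn ρ * (((colStab t).filter fun τ => τ * ρ ∈ colStab s).card : ℤ) := by
  rw [inner_expand s t, Finset.sum_comm]
  have step1 : ∀ τ : Equiv.Perm (Fin n),
      (∑ σ ∈ colStab s, sgn σ * sgn τ *
          (if (fun k => (s.pos (σ⁻¹ k)).1) = (fun k => (t.pos (τ⁻¹ k)).1) then 1 else 0))
        = ∑ ρ : Equiv.Perm (Fin n),
            (if τ * ρ ∈ colStab s then sgn ρ else 0) *
              (if (∀ k, (s.pos (ρ k)).1 = (s.pos k).1) then 1 else 0) := by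
    intro τ
    have e1 : (∑ σ ∈ colStab s, sgn σ * sgn τ *
          (if (fun k => (s.pos (σ⁻¹ k)).1) = (fun k => (t.pos (τ⁻¹ k)).1) then 1 else 0))
        = ∑ σ : Equiv.Perm (Fin n), if σ ∈ colStab s then sgn σ * sgn τ *
          (if (fun k => (s.pos (σ⁻¹ k)).1) = (fun k => (t.pos (τ⁻¹ k)).1) then 1 else 0) else 0 := by
      rw [Finset.sum_ite_mem, Finset.univ_inter]
    rw [e1, ← Equiv.sum_comp (Equiv.mulLeft τ)
      (fun σ => if σ ∈ colStab s then sgn σ * sgn τ *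
          (if (fun k => (s.pos (σ⁻¹ k)).1) = (fun k => (t.pos (τ⁻¹ k)).1) then 1 else 0) else 0)]
    refine Finset.sum_congr rfl fun ρ _ => ?_
    simp only [Equiv.coe_mulLeft]
    show (if τ * ρ ∈ colStab s then sgn (τ * ρ) * sgn τ *
      (if (fun k => (s.pos ((τ * ρ)⁻¹ k)).1) = (fun k => (t.pos (τ⁻¹ k)).1) then 1 else 0)
      else 0) = _
    by_cases hmem : τ * ρ ∈ colStab s
    · rw [if_pos hmem, if_pos hmem]
      rw [if_congr (cond_iff s t hst τ ρ) rfl rfl, sgn_mul]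
      by_cases hrf : ∀ k, (s.pos (ρ k)).1 = (s.pos k).1
      · rw [if_pos hrf, mul_one, mul_one,
          mul_comm (sgn τ) (sgn ρ), mul_assoc, sgn_sq, mul_one]
      · rw [if_neg hrf, mul_zero, mul_zero]
    · rw [if_neg hmem, if_neg hmem, zero_mul]
  have step2 : ∀ ρ : Equiv.Perm (Fin n),
      (∑ τ ∈ colStab t, (if τ * ρ ∈ colStab s then sgn ρ else 0) *
          (if (∀ k, (s.pos (ρ k)).1 = (s.pos k).1) then 1 else 0))
        = (if (∀ k, (s.pos (ρ k)).1 = (s.pos k).1) then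
            sgn ρ * (((colStab t).filter fun τ => τ * ρ ∈ colStab s).card : ℤ) else 0) := by
    intro ρ
    by_cases hrf : ∀ k, (s.pos (ρ k)).1 = (s.pos k).1
    · simp only [if_pos hrf, mul_one]
      rw [← Finset.sum_filter, Finset.sum_const, nsmul_eq_mul, mul_comm]
    · simp only [if_neg hrf, mul_zero, Finset.sum_const_zero]
  calc (∑ τ ∈ colStab t, ∑ σ ∈ colStab s, sgn σ * sgn τ *
          (if (fun k => (s.pos (σ⁻¹ k)).1) = (fun k => (t.pos (τ⁻¹ k)).1) then 1 else 0))
      = ∑ τ ∈ colStab t, ∑ ρ : Equiv.Perm (Fin n),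
            (if τ * ρ ∈ colStab s then sgn ρ else 0) *
              (if (∀ k, (s.pos (ρ k)).1 = (s.pos k).1) then 1 else 0) :=
        Finset.sum_congr rfl fun τ _ => step1 τ
    _ = ∑ ρ : Equiv.Perm (Fin n), ∑ τ ∈ colStab t,
            (if τ * ρ ∈ colStab s then sgn ρ else 0) *
              (if (∀ k, (s.pos (ρ k)).1 = (s.pos k).1) then 1 else 0) := Finset.sum_comm
    _ = ∑ ρ : Equiv.Perm (Fin n), (if (∀ k, (s.pos (ρ k)).1 = (s.pos k).1) then
            sgn ρ * (((colStab t).filter fun τ => τ * ρ ∈ colStab s).card : ℤ) else 0) :=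
        Finset.sum_congr rfl fun ρ _ => step2 ρ
    _ = _ := (Finset.sum_filter _ _).symm

end SchaperAux

namespace SchaperAux
open Equiv Finset

abbrev YT (p : ℕ) := YTableau (3*(3*p-2)) (fun i => if i < 3*p-2 then 3 else 0)

variable {p : ℕ}

lemma row_lt (u : YT p) (k : Fin (3*(3*p-2))) : (u.pos k).1 < 3*p-2 := by
  by_contra h
  have h2 := u.mem k
  rw [if_neg h] at h2
  exact Nat.not_lt_zero _ h2

lemma col_lt (u : YT p) (k : Fin (3*(3*p-2))) : (u.pos k).2 < 3 := by
  have h2 := u.mem k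
  split at h2
  · exact h2
  · exact absurd h2 (Nat.not_lt_zero _)

def rowF (u : YT p) (k : Fin (3*(3*p-2))) : Fin (3*p-2) := ⟨(u.pos k).1, row_lt u k⟩
def colF (u : YT p) (k : Fin (3*(3*p-2))) : Fin 3 := ⟨(u.pos k).2, col_lt u k⟩

noncomputable def entry (u : YT p) (x : Fin (3*p-2)) (j : Fin 3) : Fin (3*(3*p-2)) :=
  (u.surj (x.1, j.1) (by dsimp only; rw [if_pos x.2]; exact j.2)).choose

lemma entry_pos (u : YT p) (x : Fin (3*p-2)) (j : Fin 3) : u.pos (entry u x j) = (x.1, j.1) :=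
  (u.surj (x.1, j.1) (by dsimp only; rw [if_pos x.2]; exact j.2)).choose_spec

lemma rowF_entry (u : YT p) (x : Fin (3*p-2)) (j : Fin 3) : rowF u (entry u x j) = x :=
  Fin.ext (by show (u.pos (entry u x j)).1 = x.1; rw [entry_pos])

lemma colF_entry (u : YT p) (x : Fin (3*p-2)) (j : Fin 3) : colF u (entry u x j) = j :=
  Fin.ext (by show (u.pos (entry u x j)).2 = j.1; rw [entry_pos])

lemma entry_rowF_colF (u : YT p) (k : Fin (3*(3*p-2))) : entry u (rowF u k) (colF u k) = k :=
  u.inj (by rw [entry_pos]; show ((u.pos k).1, (u.pos k).2) = u.pos k; exact Prod.mk.eta)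

lemma entry_eq_of (u : YT p) {k : Fin (3*(3*p-2))} {x : Fin (3*p-2)} {j : Fin 3}
    (hr : rowF u k = x) (hc : colF u k = j) : entry u x j = k := by
  rw [← hr, ← hc]; exact entry_rowF_colF u k

lemma rowF_eq {s t : YT p} (hst : RowEquiv s t) (k : Fin (3*(3*p-2))) :
    rowF s k = rowF t k := Fin.ext (hst k)

noncomputable def rowEquiv (u : YT p) (x : Fin (3*p-2)) : Fin 3 ≃ {k // rowF u k = x} where
  toFun j := ⟨entry u x j, rowF_entry u x j⟩
  invFun k := colF u k.1
  left_inv j := colF_entry u x j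
  right_inv k := Subtype.ext (entry_eq_of u k.2 rfl)

noncomputable def W (u : YT p) : Fin (3*(3*p-2)) ≃ Fin (3*p-2) × Fin 3 where
  toFun k := (rowF u k, colF u k)
  invFun c := entry u c.1 c.2
  left_inv k := entry_rowF_colF u k
  right_inv c := by
    obtain ⟨x, j⟩ := c
    show (rowF u (entry u x j), colF u (entry u x j)) = (x, j)
    rw [rowF_entry, colF_entry]

/-- The permutation of columns induced in row `x` when passing from `t`-columns to `s`-columns. -/
noncomputable def piX (s t : YT p) (hst : RowEquiv s t) (x : Fin (3*p-2)) : Equiv.Perm (Fin 3) where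
  toFun i := colF s (entry t x i)
  invFun j := colF t (entry s x j)
  left_inv i := by
    have h1 : rowF s (entry t x i) = x := by rw [rowF_eq hst]; exact rowF_entry t x i
    have h2 : entry s x (colF s (entry t x i)) = entry t x i := entry_eq_of s h1 rfl
    show colF t (entry s x (colF s (entry t x i))) = i
    rw [h2, colF_entry]
  right_inv j := by
    have h1 : rowF t (entry s x j) = x := by rw [← rowF_eq hst]; exact rowF_entry s x j
    have h2 : entry t x (colF t (entry s x j)) = entry s x j := entry_eq_of t h1 rfl
    show colF s (entry t x (colF t (entry s x j))) = j
    rw [h2, colF_entry]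

/-- Glue a family of per-row column permutations into a row-preserving permutation. -/
noncomputable def Psi (s : YT p) (μ : Fin (3*p-2) → Equiv.Perm (Fin 3)) : Equiv.Perm (Fin (3*(3*p-2))) :=
  (W s).symm.permCongr (Equiv.prodCongrRight μ)

lemma Psi_apply (s : YT p) (μ : Fin (3*p-2) → Equiv.Perm (Fin 3)) (k) :
    Psi s μ k = entry s (rowF s k) (μ (rowF s k) (colF s k)) := rfl

lemma rowF_Psi (s : YT p) (μ) (k) : rowF s (Psi s μ k) = rowF s k := by
  rw [Psi_apply, rowF_entry]

lemma Psi_inv_apply (s : YT p) (μ : Fin (3*p-2) → Equiv.Perm (Fin 3)) (k) :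
    (Psi s μ)⁻¹ k = entry s (rowF s k) ((μ (rowF s k))⁻¹ (colF s k)) := by
  rw [Equiv.Perm.inv_eq_iff_eq, Psi_apply, rowF_entry, colF_entry, Equiv.Perm.apply_inv_self,
    entry_rowF_colF]

lemma Psi_inj (s : YT p) : Function.Injective (Psi s) := by
  intro μ ν h
  funext x
  apply Equiv.ext
  intro j
  have h2 := congrArg (fun σ : Equiv.Perm (Fin (3*(3*p-2))) => σ (entry s x j)) h
  simp only [Psi_apply, rowF_entry, colF_entry] at h2
  have h3 := congrArg (colF s) h2
  rwa [colF_entry, colF_entry] at h3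

lemma sgn_Psi (s : YT p) (μ : Fin (3*p-2) → Equiv.Perm (Fin 3)) :
    sgn (Psi s μ) = ∏ x, sgn (μ x) := by
  have h1 : Equiv.Perm.sign (Psi s μ) = ∏ x, Equiv.Perm.sign (μ x) := by
    rw [Psi, Equiv.Perm.sign_permCongr, Equiv.Perm.sign_prodCongrRight]
  simp only [sgn, h1]
  exact map_prod (Units.coeHom ℤ) _ _

lemma exists_Psi (s : YT p) (ρ : Equiv.Perm (Fin (3*(3*p-2))))
    (hρ : ∀ k, rowF s (ρ k) = rowF s k) : ∃ μ, Psi s μ = ρ := by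
  have hρ' : ∀ k, rowF s (ρ⁻¹ k) = rowF s k := by
    intro k
    have h := hρ (ρ⁻¹ k)
    rw [Equiv.Perm.apply_inv_self] at h
    exact h.symm
  refine ⟨fun x =>
    { toFun := fun j => colF s (ρ (entry s x j))
      invFun := fun j => colF s (ρ⁻¹ (entry s x j))
      left_inv := ?_
      right_inv := ?_ }, ?_⟩
  · intro j
    have h1 : rowF s (ρ (entry s x j)) = x := by rw [hρ]; exact rowF_entry s x j
    have h2 : entry s x (colF s (ρ (entry s x j))) = ρ (entry s x j) := entry_eq_of s h1 rfl
    show colF s (ρ⁻¹ (entry s x (colF s (ρ (entry s x j))))) = j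
    rw [h2, Equiv.Perm.inv_apply_self, colF_entry]
  · intro j
    have h1 : rowF s (ρ⁻¹ (entry s x j)) = x := by rw [hρ']; exact rowF_entry s x j
    have h2 : entry s x (colF s (ρ⁻¹ (entry s x j))) = ρ⁻¹ (entry s x j) := entry_eq_of s h1 rfl
    show colF s (ρ (entry s x (colF s (ρ⁻¹ (entry s x j))))) = j
    rw [h2, Equiv.Perm.apply_inv_self, colF_entry]
  · apply Equiv.ext
    intro k
    rw [Psi_apply]
    show entry s (rowF s k) (colF s (ρ (entry s (rowF s k) (colF s k)))) = ρ k
    rw [entry_rowF_colF]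
    exact entry_eq_of s (hρ k) rfl

end SchaperAux

namespace SchaperAux
open Equiv Finset

variable {p : ℕ}

def Fpair (s t : YT p) (k : Fin (3*(3*p-2))) : Fin 3 × Fin 3 := (colF t k, colF s k)

noncomputable def Acard (s t : YT p) (b : Fin 3 × Fin 3) : ℕ :=
  Fintype.card {k // Fpair s t k = b}

noncomputable def Kfac (s t : YT p) : ℕ :=
  ∏ b : Fin 3 × Fin 3, Nat.factorial (Acard s t b)

def matchCond (s t : YT p) (ρ : Equiv.Perm (Fin (3*(3*p-2)))) : Prop :=
  ∀ b, Acard s t b = Fintype.card {k // (colF t k, colF s (ρ⁻¹ k)) = b}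

noncomputable instance (s t : YT p) (ρ : Equiv.Perm (Fin (3*(3*p-2)))) :
    Decidable (matchCond s t ρ) := by unfold matchCond; infer_instance

noncomputable def Ssum (s t : YT p) : ℤ :=
  ∑ ρ ∈ (Finset.univ : Finset (Equiv.Perm (Fin (3*(3*p-2))))).filter
      (fun ρ => (∀ k, (s.pos (ρ k)).1 = (s.pos k).1) ∧ matchCond s t ρ),
    sgn ρ

lemma colStab_iff (s t : YT p) (τ ρ : Equiv.Perm (Fin (3*(3*p-2)))) :
    (τ ∈ colStab t ∧ τ * ρ ∈ colStab s)
      ↔ ∀ k, Fpair s t (τ k) = (colF t k, colF s (ρ⁻¹ k)) := by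
  simp only [colStab, Finset.mem_filter, Finset.mem_univ, true_and]
  constructor
  · rintro ⟨h1, h2⟩ k
    have hc1 : colF t (τ k) = colF t k := Fin.ext (h1 k)
    have hc2 : colF s (τ k) = colF s (ρ⁻¹ k) := by
      have h3 := h2 (ρ⁻¹ k)
      rw [Equiv.Perm.mul_apply, Equiv.Perm.apply_inv_self] at h3
      exact Fin.ext h3
    rw [Fpair, hc1, hc2]
  · intro h
    constructor
    · intro k
      exact congrArg Fin.val (congrArg Prod.fst (h k))
    · intro k
      have h3 := congrArg Prod.snd (h (ρ k))
      simp only [Fpair, Equiv.Perm.inv_apply_self] at h3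
      exact congrArg Fin.val h3

lemma card_tau_filter (s t : YT p) (ρ : Equiv.Perm (Fin (3*(3*p-2)))) :
    (((colStab t).filter fun τ => τ * ρ ∈ colStab s).card : ℤ)
      = if matchCond s t ρ then (Kfac s t : ℤ) else 0 := by
  have h0 : (colStab t).filter (fun τ => τ * ρ ∈ colStab s)
      = Finset.univ.filter (fun τ => τ ∈ colStab t ∧ τ * ρ ∈ colStab s) := by
    rw [show colStab t = Finset.univ.filter
        (fun σ => ∀ k, (t.pos (σ k)).2 = (t.pos k).2) from rfl, Finset.filter_filter]
    exact Finset.filter_congr fun τ _ => by simp [colStab]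
  rw [h0, card_filter_eq_of_perm_comp (Fpair s t) (fun k => (colF t k, colF s (ρ⁻¹ k)))
    (fun τ => colStab_iff s t τ ρ)]
  by_cases hm : matchCond s t ρ
  · have hcond : ∀ b : Fin 3 × Fin 3,
        Fintype.card {k // Fpair s t k = b}
          = Fintype.card {k // ((colF t k, colF s (ρ⁻¹ k)) : Fin 3 × Fin 3) = b} := fun b =>
      ((Fintype.card_congr' rfl).trans (hm b)).trans (Fintype.card_congr' rfl)
    rw [if_pos hcond, if_pos hm]
    refine Nat.cast_inj.mpr (Finset.prod_congr rfl fun b _ => ?_)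
    exact congrArg Nat.factorial (Fintype.card_congr' rfl)
  · have hcond : ¬ ∀ b : Fin 3 × Fin 3,
        Fintype.card {k // Fpair s t k = b}
          = Fintype.card {k // ((colF t k, colF s (ρ⁻¹ k)) : Fin 3 × Fin 3) = b} := by
      intro hc
      exact hm fun b =>
        ((Fintype.card_congr' rfl).trans (hc b)).trans (Fintype.card_congr' rfl)
    rw [if_neg hcond, if_neg hm, Nat.cast_zero]

lemma inner_eq_K_mul_S (s t : YT p) (hst : RowEquiv s t) :
    tabloidInner (polytabloid s) (polytabloid t) = (Kfac s t : ℤ) * Ssum s t := by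
  rw [inner_eq_rho_sum s t hst]
  have h1 : ∀ ρ ∈ (Finset.univ : Finset (Equiv.Perm (Fin (3*(3*p-2))))).filter
      (fun ρ => ∀ k, (s.pos (ρ k)).1 = (s.pos k).1),
      sgn ρ * (((colStab t).filter fun τ => τ * ρ ∈ colStab s).card : ℤ)
        = if matchCond s t ρ then (Kfac s t : ℤ) * sgn ρ else 0 := by
    intro ρ _
    rw [card_tau_filter s t ρ]
    by_cases hm : matchCond s t ρ
    · rw [if_pos hm, if_pos hm, mul_comm]
    · rw [if_neg hm, if_neg hm, mul_zero]
  rw [Finset.sum_congr rfl h1, ← Finset.sum_filter, Finset.filter_filter,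
    show Ssum s t = ∑ ρ ∈ (Finset.univ : Finset (Equiv.Perm (Fin (3*(3*p-2))))).filter
      (fun ρ => (∀ k, (s.pos (ρ k)).1 = (s.pos k).1) ∧ matchCond s t ρ), sgn ρ from rfl,
    ← Finset.mul_sum]

end SchaperAux

namespace SchaperAux
open Equiv Finset

variable {p : ℕ}

lemma sgn_inv {n : ℕ} (σ : Equiv.Perm (Fin n)) : sgn σ⁻¹ = sgn σ := by
  simp [sgn, Equiv.Perm.sign_inv]

lemma piX_apply (s t : YT p) (hst : RowEquiv s t) (x : Fin (3*p-2)) (i : Fin 3) :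
    piX s t hst x i = colF s (entry t x i) := rfl

noncomputable def Tdom (s t : YT p) : Finset (Fin (3*p-2) → Equiv.Perm (Fin 3)) :=
  Finset.univ.filter fun h => ∀ b : Fin 3 × Fin 3,
    Acard s t b = (Finset.univ.filter fun x => h x b.1 = b.2).card

noncomputable def Tsum (s t : YT p) : ℤ := ∑ h ∈ Tdom s t, ∏ x, sgn (h x)

noncomputable def epsP (s t : YT p) (hst : RowEquiv s t) : ℤ := ∏ x, sgn (piX s t hst x)

lemma card_G_Psi (s t : YT p) (hst : RowEquiv s t)
    (μ : Fin (3*p-2) → Equiv.Perm (Fin 3)) (b : Fin 3 × Fin 3) :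
    Fintype.card {k // ((colF t k, colF s ((Psi s μ)⁻¹ k)) : Fin 3 × Fin 3) = b}
      = (Finset.univ.filter fun x => ((μ x)⁻¹ * piX s t hst x) b.1 = b.2).card := by
  obtain ⟨i, j⟩ := b
  have key1 : ∀ k : Fin (3*(3*p-2)), colF t k = i →
      ((μ (rowF s k))⁻¹ * piX s t hst (rowF s k)) i = colF s ((Psi s μ)⁻¹ k) := by
    intro k h1
    have hk_eq : entry t (rowF s k) i = k := entry_eq_of t (rowF_eq hst k).symm h1
    have h2 : piX s t hst (rowF s k) i = colF s k := by rw [piX_apply, hk_eq]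
    rw [Equiv.Perm.mul_apply, h2, Psi_inv_apply, colF_entry]
  have E : {k // ((colF t k, colF s ((Psi s μ)⁻¹ k)) : Fin 3 × Fin 3) = (i, j)}
      ≃ {x // ((μ x)⁻¹ * piX s t hst x) i = j} :=
    { toFun := fun k => ⟨rowF s k.1, by
        have h1 : colF t k.1 = i := congrArg Prod.fst k.2
        have h2 : colF s ((Psi s μ)⁻¹ k.1) = j := congrArg Prod.snd k.2
        rw [key1 k.1 h1, h2]⟩
      invFun := fun x => ⟨entry t x.1 i, by
        have h1 : colF t (entry t x.1 i) = i := colF_entry t x.1 i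
        have hr : rowF s (entry t x.1 i) = x.1 := by
          rw [rowF_eq hst]; exact rowF_entry t x.1 i
        have h2 := key1 (entry t x.1 i) h1
        rw [hr] at h2
        rw [h1, ← h2, x.2]⟩
      left_inv := fun k => Subtype.ext
        (entry_eq_of t (rowF_eq hst k.1).symm (congrArg Prod.fst k.2))
      right_inv := fun x => Subtype.ext (by
        show rowF s (entry t x.1 i) = x.1
        rw [rowF_eq hst]; exact rowF_entry t x.1 i) }
  rw [Fintype.card_congr E, Fintype.card_subtype]

lemma matchCond_Psi (s t : YT p) (hst : RowEquiv s t) (h : Fin (3*p-2) → Equiv.Perm (Fin 3)) :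
    matchCond s t (Psi s (fun x => piX s t hst x * (h x)⁻¹))
      ↔ ∀ b : Fin 3 × Fin 3,
          Acard s t b = (Finset.univ.filter fun x => h x b.1 = b.2).card := by
  have hgr : ∀ x, (((fun x => piX s t hst x * (h x)⁻¹) x) ⁻¹ * piX s t hst x) = h x := by
    intro x
    show (piX s t hst x * (h x)⁻¹)⁻¹ * piX s t hst x = h x
    group
  constructor
  · intro hm b
    have h2 := hm b
    rw [card_G_Psi s t hst _ b] at h2
    simp only [hgr] at h2
    exact h2
  · intro hd b
    rw [card_G_Psi s t hst _ b]
    simp only [hgr]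
    exact hd b

lemma Ssum_eq (s t : YT p) (hst : RowEquiv s t) :
    Ssum s t = epsP s t hst * Tsum s t := by
  have himg : ((Finset.univ : Finset (Equiv.Perm (Fin (3*(3*p-2))))).filter
        (fun ρ => (∀ k, (s.pos (ρ k)).1 = (s.pos k).1) ∧ matchCond s t ρ))
      = (Tdom s t).image (fun h => Psi s (fun x => piX s t hst x * (h x)⁻¹)) := by
    ext ρ
    simp only [Finset.mem_filter, Finset.mem_univ, true_and, Finset.mem_image]
    constructor
    · rintro ⟨hrow, hmatch⟩
      obtain ⟨μ, hμ⟩ := exists_Psi s ρ (fun k => Fin.ext (hrow k))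
      rw [← hμ] at hmatch
      refine ⟨fun x => (μ x)⁻¹ * piX s t hst x, ?_, ?_⟩
      · rw [Tdom, Finset.mem_filter]
        refine ⟨Finset.mem_univ _, fun b => ?_⟩
        have h2 := hmatch b
        rw [card_G_Psi s t hst μ b] at h2
        exact h2
      · have hgr2 : ∀ x, piX s t hst x * ((fun x => (μ x)⁻¹ * piX s t hst x) x)⁻¹ = μ x := by
          intro x
          show piX s t hst x * ((μ x)⁻¹ * piX s t hst x)⁻¹ = μ x
          group
        simp only [hgr2]
        exact hμ
    · rintro ⟨h, hdom, rfl⟩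
      refine ⟨fun k => congrArg Fin.val (rowF_Psi s _ k), ?_⟩
      rw [show (matchCond s t (Psi s fun x => piX s t hst x * (h x)⁻¹)) ↔ _
        from matchCond_Psi s t hst h]
      rw [Tdom, Finset.mem_filter] at hdom
      exact hdom.2
  rw [show Ssum s t = ∑ ρ ∈ (Finset.univ : Finset (Equiv.Perm (Fin (3*(3*p-2))))).filter
      (fun ρ => (∀ k, (s.pos (ρ k)).1 = (s.pos k).1) ∧ matchCond s t ρ), sgn ρ from rfl]
  rw [himg, Finset.sum_image ?hinj]
  case hinj =>
    intro h1 _ h2 _ heq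
    have h3 := Psi_inj s heq
    funext x
    have h4 : piX s t hst x * (h1 x)⁻¹ = piX s t hst x * (h2 x)⁻¹ := congrFun h3 x
    exact inv_injective (mul_left_cancel h4)
  rw [show Tsum s t = ∑ h ∈ Tdom s t, ∏ x, sgn (h x) from rfl, Finset.mul_sum]
  refine Finset.sum_congr rfl fun h hh => ?_
  rw [sgn_Psi]
  rw [show epsP s t hst = ∏ x, sgn (piX s t hst x) from rfl, ← Finset.prod_mul_distrib]
  refine Finset.prod_congr rfl fun x _ => ?_
  rw [sgn_mul, sgn_inv]

end SchaperAux

namespace SchaperAux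
open Equiv Finset

variable {p : ℕ}

lemma factorization_factorial_eq (hp : p.Prime) {a : ℕ} (ha : a < p^2) :
    (Nat.factorial a).factorization p = a / p := by
  haveI := Fact.mk hp
  rw [Nat.factorization_def _ hp]
  have hlog : Nat.log p a < 2 := by
    rcases Nat.eq_zero_or_pos a with h0 | h0
    · simp [h0]
    · exact Nat.log_lt_of_lt_pow h0.ne' ha
  rw [padicValNat_factorial hlog]
  rw [show Finset.Ico 1 2 = {1} from by decide]
  simp

lemma pow_div_dvd_factorial (hp : p.Prime) (a : ℕ) : p ^ (a / p) ∣ Nat.factorial a := by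
  haveI := Fact.mk hp
  rcases Nat.lt_or_ge a p with h | h
  · rw [Nat.div_eq_of_lt h]
    simp
  · rw [padicValNat_dvd_iff_le (Nat.factorial_ne_zero a),
      padicValNat_factorial (Nat.lt_succ_self _)]
    have hmem : 1 ∈ Finset.Ico 1 (Nat.log p a + 1) := by
      rw [Finset.mem_Ico]
      exact ⟨le_refl 1, Nat.succ_lt_succ (Nat.log_pos hp.one_lt h)⟩
    have h2 := Finset.single_le_sum (f := fun i => a / p ^ i)
      (fun i _ => Nat.zero_le _) hmem
    simpa using h2

lemma m_factorial_factorization (hp : p.Prime) (hp3 : 3 ≤ p) :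
    (Nat.factorial (3*p-2)).factorization p = 2 := by
  have hq : 3*p ≤ p*p := Nat.mul_le_mul_right p hp3
  have hlt : 3*p-2 < p^2 := by rw [pow_two]; omega
  rw [factorization_factorial_eq hp hlt]
  have h1 : 3*p-2 = (p-2) + p*2 := by omega
  rw [h1, Nat.add_mul_div_left _ _ hp.pos, Nat.div_eq_of_lt (by omega : p-2 < p)]

lemma count_decomp (m : ℕ) (h : Fin m → Equiv.Perm (Fin 3)) (i j : Fin 3) :
    (Finset.univ.filter fun x => h x i = j).card
      = ∑ g ∈ Finset.univ.filter (fun g : Equiv.Perm (Fin 3) => g i = j),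
          (Finset.univ.filter fun x => h x = g).card := by
  rw [Finset.card_eq_sum_card_fiberwise
    (f := h) (t := Finset.univ.filter (fun g : Equiv.Perm (Fin 3) => g i = j))
    (fun x hx => by
      rw [Finset.mem_coe, Finset.mem_filter] at hx
      rw [Finset.mem_coe, Finset.mem_filter]
      exact ⟨Finset.mem_univ _, hx.2⟩)]
  refine Finset.sum_congr rfl fun g hg => ?_
  congr 1
  rw [Finset.filter_filter]
  ext x
  simp only [Finset.mem_filter, Finset.mem_univ, true_and]
  constructor
  · rintro ⟨_, h2⟩; exact h2
  · intro h2
    exact ⟨by rw [h2]; exact (Finset.mem_filter.mp hg).2, h2⟩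

lemma sum_counts (m : ℕ) (h : Fin m → Equiv.Perm (Fin 3)) :
    ∑ g : Equiv.Perm (Fin 3), (Finset.univ.filter fun x => h x = g).card = m := by
  rw [← Finset.card_eq_sum_card_fiberwise (fun x (_ : x ∈ Finset.univ) => Finset.mem_univ (h x))]
  simp

lemma count_comp_perm (m : ℕ) (h : Fin m → Equiv.Perm (Fin 3)) (π : Equiv.Perm (Fin m))
    (g : Equiv.Perm (Fin 3)) :
    (Finset.univ.filter fun x => h (π x) = g).card
      = (Finset.univ.filter fun x => h x = g).card := by
  refine Finset.card_bij (fun x _ => π x) ?_ ?_ ?_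
  · intro a ha
    rw [Finset.mem_filter] at ha ⊢
    exact ⟨Finset.mem_univ _, ha.2⟩
  · intro a _ b _ hab
    exact π.injective hab
  · intro b hb
    refine ⟨π⁻¹ b, ?_, π.apply_inv_self b⟩
    rw [Finset.mem_filter]
    refine ⟨Finset.mem_univ _, ?_⟩
    rw [Equiv.Perm.apply_inv_self]
    exact (Finset.mem_filter.mp hb).2

lemma fiber_count_mul (m : ℕ) (nv : Equiv.Perm (Fin 3) → ℕ) (h₁ : Fin m → Equiv.Perm (Fin 3))
    (hch : ∀ g, (Finset.univ.filter fun x => h₁ x = g).card = nv g) :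
    (Finset.univ.filter fun h : Fin m → Equiv.Perm (Fin 3) =>
        ∀ g, (Finset.univ.filter fun x => h x = g).card = nv g).card
      * ∏ g : Equiv.Perm (Fin 3), Nat.factorial (nv g) = Nat.factorial m := by
  have hmaps : ∀ π : Equiv.Perm (Fin m), π ∈ (Finset.univ : Finset (Equiv.Perm (Fin m))) →
      (fun x => h₁ (π x)) ∈ (Finset.univ.filter fun h : Fin m → Equiv.Perm (Fin 3) =>
        ∀ g, (Finset.univ.filter fun x => h x = g).card = nv g) := by
    intro π _
    rw [Finset.mem_filter]
    exact ⟨Finset.mem_univ _, fun g => (count_comp_perm m h₁ π g).trans (hch g)⟩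
  have hcard := Finset.card_eq_sum_card_fiberwise hmaps
  have hfib : ∀ f ∈ (Finset.univ.filter fun h : Fin m → Equiv.Perm (Fin 3) =>
      ∀ g, (Finset.univ.filter fun x => h x = g).card = nv g),
      (Finset.univ.filter fun π : Equiv.Perm (Fin m) => (fun x => h₁ (π x)) = f).card
        = ∏ g : Equiv.Perm (Fin 3), Nat.factorial (nv g) := by
    intro f hf
    have hf2 := (Finset.mem_filter.mp hf).2
    rw [Finset.filter_congr (fun π (_ : π ∈ Finset.univ) =>
      (funext_iff : (fun x => h₁ (π x)) = f ↔ ∀ x, h₁ (π x) = f x))]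
    rw [card_filter_eq_of_perm_comp h₁ f (fun τ => Iff.rfl)]
    have hcond : ∀ b, Fintype.card {k // h₁ k = b} = Fintype.card {k // f k = b} := by
      intro b
      rw [Fintype.card_subtype, Fintype.card_subtype, hch b, hf2 b]
    rw [if_pos hcond]
    refine Finset.prod_congr rfl fun g _ => ?_
    rw [Fintype.card_subtype, hch g]
  rw [Finset.sum_congr rfl hfib, Finset.sum_const, smul_eq_mul] at hcard
  rw [Finset.card_univ, Fintype.card_perm, Fintype.card_fin] at hcard
  exact hcard.symm

lemma dvd_multinomial_aux (hp : p.Prime) (hp3 : 3 ≤ p) (nv : Equiv.Perm (Fin 3) → ℕ)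
    (hsum : ∑ g, nv g = 3*p-2) (hquot : ∑ g : Equiv.Perm (Fin 3), nv g / p ≤ 1)
    (C : ℕ) (hC : C * ∏ g : Equiv.Perm (Fin 3), Nat.factorial (nv g) = Nat.factorial (3*p-2)) :
    p ∣ C := by
  haveI := Fact.mk hp
  have hC0 : C ≠ 0 := by
    intro h0
    rw [h0, zero_mul] at hC
    exact (Nat.factorial_ne_zero _) hC.symm
  have hP0 : (∏ g : Equiv.Perm (Fin 3), Nat.factorial (nv g)) ≠ 0 := by positivity
  have h1 : (Nat.factorial (3*p-2)).factorization p
      = C.factorization p + (∏ g : Equiv.Perm (Fin 3), Nat.factorial (nv g)).factorization p := by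
    rw [← hC, Nat.factorization_mul hC0 hP0]
    rfl
  have h2 : (∏ g : Equiv.Perm (Fin 3), Nat.factorial (nv g)).factorization p
      = ∑ g : Equiv.Perm (Fin 3), nv g / p := by
    rw [Nat.factorization_prod (fun g _ => Nat.factorial_ne_zero (nv g))]
    rw [Finset.sum_apply']
    refine Finset.sum_congr rfl fun g _ => ?_
    have hle : nv g ≤ 3*p-2 := hsum ▸ Finset.single_le_sum
      (f := fun g => nv g) (fun g _ => Nat.zero_le _) (Finset.mem_univ g)
    have hq : 3*p ≤ p*p := Nat.mul_le_mul_right p hp3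
    exact factorization_factorial_eq hp (by rw [pow_two]; omega)
  have h3 := m_factorial_factorization hp hp3
  rw [h3, h2] at h1
  refine (Nat.Prime.dvd_iff_one_le_factorization hp hC0).mpr ?_
  omega

lemma dvd_Tsum (hp : p.Prime) (hp3 : 3 ≤ p) (s t : YT p)
    (hrow0 : ∑ j : Fin 3, Acard s t (0, j) / p = 1) :
    (p : ℤ) ∣ Tsum s t := by
  rw [show Tsum s t = ∑ h ∈ Tdom s t, ∏ x, sgn (h x) from rfl]
  rw [← Finset.sum_fiberwise_of_maps_to
    (g := fun h : Fin (3*p-2) → Equiv.Perm (Fin 3) =>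
      fun g => (Finset.univ.filter fun x => h x = g).card)
    (t := (Tdom s t).image fun h g => (Finset.univ.filter fun x => h x = g).card)
    (fun h hh => Finset.mem_image_of_mem _ hh)]
  refine Finset.dvd_sum fun nv hnv => ?_
  obtain ⟨h₁, hh₁, hch₁⟩ := Finset.mem_image.mp hnv
  have hdom₁ : ∀ b : Fin 3 × Fin 3,
      Acard s t b = (Finset.univ.filter fun x => h₁ x b.1 = b.2).card :=
    (Finset.mem_filter.mp hh₁).2
  have hnvcount : ∀ g, (Finset.univ.filter fun x => h₁ x = g).card = nv g :=
    fun g => congrFun hch₁ g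
  have hfib_eq : (Tdom s t).filter
        (fun h => (fun g => (Finset.univ.filter fun x => h x = g).card) = nv)
      = Finset.univ.filter
        (fun h : Fin (3*p-2) → Equiv.Perm (Fin 3) =>
          (fun g => (Finset.univ.filter fun x => h x = g).card) = nv) := by
    ext h
    simp only [Finset.mem_filter, Finset.mem_univ, true_and, Tdom]
    constructor
    · rintro ⟨_, hc⟩
      exact hc
    · intro hc
      refine ⟨fun b => ?_, hc⟩
      rw [hdom₁ b, count_decomp, count_decomp]
      refine Finset.sum_congr rfl fun g hg => ?_
      rw [hnvcount g]
      exact (congrFun hc g).symm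
  rw [hfib_eq]
  have hval : ∀ h ∈ Finset.univ.filter
      (fun h : Fin (3*p-2) → Equiv.Perm (Fin 3) =>
        (fun g => (Finset.univ.filter fun x => h x = g).card) = nv),
      (∏ x, sgn (h x)) = ∏ g : Equiv.Perm (Fin 3), (sgn g)^(nv g) := by
    intro h hh
    have hc := (Finset.mem_filter.mp hh).2
    calc (∏ x, sgn (h x))
        = ∏ g : Equiv.Perm (Fin 3), ∏ x ∈ Finset.univ.filter (fun x => h x = g), sgn (h x) :=
          (Finset.prod_fiberwise_of_maps_to (fun x _ => Finset.mem_univ (h x)) _).symm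
      _ = ∏ g : Equiv.Perm (Fin 3), (sgn g)^(nv g) := by
          refine Finset.prod_congr rfl fun g _ => ?_
          rw [Finset.prod_congr rfl (fun x hx => by rw [(Finset.mem_filter.mp hx).2]),
            Finset.prod_const, congrFun hc g]
  rw [Finset.sum_congr rfl hval, Finset.sum_const, nsmul_eq_mul]
  refine Dvd.dvd.mul_right ?_ _
  have hsum : ∑ g, nv g = 3*p-2 := by
    have h4 := sum_counts (3*p-2) h₁
    rw [Finset.sum_congr rfl (fun g _ => hnvcount g)] at h4
    exact h4
  have hquot : ∑ g : Equiv.Perm (Fin 3), nv g / p ≤ 1 := by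
    have hA : ∀ jj : Fin 3, Acard s t (0, jj)
        = ∑ g ∈ Finset.univ.filter (fun g : Equiv.Perm (Fin 3) => g 0 = jj), nv g := by
      intro jj
      rw [hdom₁ (0, jj), count_decomp]
      exact Finset.sum_congr rfl fun g _ => hnvcount g
    have hstep : ∀ jj : Fin 3,
        ∑ g ∈ Finset.univ.filter (fun g : Equiv.Perm (Fin 3) => g 0 = jj), nv g / p
          ≤ Acard s t (0, jj) / p := by
      intro jj
      rw [Nat.le_div_iff_mul_le hp.pos, hA jj]
      calc (∑ g ∈ Finset.univ.filter (fun g : Equiv.Perm (Fin 3) => g 0 = jj), nv g / p) * p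
          = ∑ g ∈ Finset.univ.filter (fun g : Equiv.Perm (Fin 3) => g 0 = jj), (nv g / p) * p := by
            rw [Finset.sum_mul]
        _ ≤ ∑ g ∈ Finset.univ.filter (fun g : Equiv.Perm (Fin 3) => g 0 = jj), nv g :=
            Finset.sum_le_sum fun g _ => Nat.div_mul_le_self _ _
    have hpart : ∑ g : Equiv.Perm (Fin 3), nv g / p
        = ∑ jj : Fin 3, ∑ g ∈ Finset.univ.filter
            (fun g : Equiv.Perm (Fin 3) => g 0 = jj), nv g / p :=
      (Finset.sum_fiberwise_of_maps_to (fun g _ => Finset.mem_univ (g 0)) _).symm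
    calc ∑ g : Equiv.Perm (Fin 3), nv g / p
        = ∑ jj : Fin 3, ∑ g ∈ Finset.univ.filter
            (fun g : Equiv.Perm (Fin 3) => g 0 = jj), nv g / p := hpart
      _ ≤ ∑ jj : Fin 3, Acard s t (0, jj) / p := Finset.sum_le_sum fun jj _ => hstep jj
      _ = 1 := hrow0
  have hfilter_eq : Finset.univ.filter
        (fun h : Fin (3*p-2) → Equiv.Perm (Fin 3) =>
          (fun g => (Finset.univ.filter fun x => h x = g).card) = nv)
      = Finset.univ.filter
        (fun h : Fin (3*p-2) → Equiv.Perm (Fin 3) =>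
          ∀ g, (Finset.univ.filter fun x => h x = g).card = nv g) :=
    Finset.filter_congr fun h _ => funext_iff
  have hCmul := fiber_count_mul (3*p-2) nv h₁ hnvcount
  have hdvd := dvd_multinomial_aux hp hp3 nv hsum hquot _ hCmul
  rw [hfilter_eq]
  exact_mod_cast Int.natCast_dvd_natCast.mpr hdvd

end SchaperAux

namespace SchaperAux
open Equiv Finset

variable {p : ℕ}

lemma main_dvd (hp : p.Prime) (hp3 : 3 ≤ p) (s t : YT p) (hst : RowEquiv s t) :
    (p:ℤ)^4 ∣ tabloidInner (polytabloid s) (polytabloid t) := by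
  rw [inner_eq_K_mul_S s t hst, Ssum_eq s t hst]
  have hKdvd : ∀ c : ℕ, c ≤ ∑ b : Fin 3 × Fin 3, Acard s t b / p → (p:ℕ)^c ∣ Kfac s t := by
    intro c hc
    have h1 : ∏ b : Fin 3 × Fin 3, p ^ (Acard s t b / p) ∣ Kfac s t :=
      Finset.prod_dvd_prod_of_dvd _ _ (fun b _ => pow_div_dvd_factorial hp (Acard s t b))
    rw [Finset.prod_pow_eq_pow_sum] at h1
    exact dvd_trans (pow_dvd_pow p hc) h1
  by_cases h4 : 4 ≤ ∑ b : Fin 3 × Fin 3, Acard s t b / p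
  · have h5 := hKdvd 4 h4
    have h6 : (p:ℤ)^4 ∣ (Kfac s t : ℤ) := by
      have := Int.natCast_dvd_natCast.mpr h5
      rwa [Nat.cast_pow] at this
    exact Dvd.dvd.mul_right h6 _
  · push_neg at h4
    by_cases hT : Tdom s t = ∅
    · rw [show Tsum s t = ∑ h ∈ Tdom s t, ∏ x, sgn (h x) from rfl, hT, Finset.sum_empty,
        mul_zero, mul_zero]
      exact dvd_zero _
    · obtain ⟨h₀, hh₀⟩ := Finset.nonempty_iff_ne_empty.mpr hT
      have hdom₀ : ∀ b : Fin 3 × Fin 3,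
          Acard s t b = (Finset.univ.filter fun x => h₀ x b.1 = b.2).card :=
        (Finset.mem_filter.mp hh₀).2
      have hrowA : ∀ i : Fin 3, ∑ j : Fin 3, Acard s t (i, j) = 3*p-2 := by
        intro i
        have h7 : ∑ j : Fin 3, (Finset.univ.filter fun x => h₀ x i = j).card = 3*p-2 := by
          rw [← Finset.card_eq_sum_card_fiberwise
            (f := fun x => h₀ x i) (t := Finset.univ) (fun x _ => Finset.mem_univ _)]
          simp
        rw [Finset.sum_congr rfl fun j (_ : j ∈ Finset.univ) => hdom₀ (i, j)]
        exact h7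
      have hrowq : ∀ i : Fin 3, 1 ≤ ∑ j : Fin 3, Acard s t (i, j) / p := by
        intro i
        by_contra hno
        push_neg at hno
        have h0 : ∑ j : Fin 3, Acard s t (i, j) / p = 0 := by omega
        rw [Finset.sum_eq_zero_iff] at h0
        have hlt : ∀ j : Fin 3, Acard s t (i, j) < p := fun j =>
          (Nat.div_eq_zero_iff_lt hp.pos).mp (h0 j (Finset.mem_univ j))
        have hsum3 := hrowA i
        rw [Fin.sum_univ_three] at hsum3
        have l0 := hlt 0
        have l1 := hlt 1
        have l2 := hlt 2
        omega
      have hsplit : ∑ b : Fin 3 × Fin 3, Acard s t b / p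
          = ∑ i : Fin 3, ∑ j : Fin 3, Acard s t (i, j) / p := Fintype.sum_prod_type _
      have r0 := hrowq 0
      have r1 := hrowq 1
      have r2 := hrowq 2
      rw [hsplit, Fin.sum_univ_three] at h4
      have h31 : ∑ b : Fin 3 × Fin 3, Acard s t b / p = 3 := by
        rw [hsplit, Fin.sum_univ_three]; omega
      have hrow0 : ∑ j : Fin 3, Acard s t (0, j) / p = 1 := by omega
      have hK3 : (p:ℤ)^3 ∣ (Kfac s t : ℤ) := by
        have := Int.natCast_dvd_natCast.mpr (hKdvd 3 (by omega))
        rwa [Nat.cast_pow] at this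
      have hTdvd := dvd_Tsum hp hp3 s t hrow0
      have hcomb : (p:ℤ)^4 ∣ (Kfac s t : ℤ) * Tsum s t := by
        have h44 : (p:ℤ)^4 = (p:ℤ)^3 * p := by ring
        rw [h44]
        exact mul_dvd_mul hK3 hTdvd
      rw [mul_left_comm]
      exact Dvd.dvd.mul_left hcomb _

lemma inner_self {n : ℕ} {lam : ℕ → ℕ} (t : YTableau n lam) :
    tabloidInner (polytabloid t) (polytabloid t) = ((colStab t).card : ℤ) := by
  rw [inner_expand t t]
  have hterm : ∀ σ ∈ colStab t, ∀ τ ∈ colStab t,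
      (sgn σ * sgn τ *
        (if (fun k => (t.pos (σ⁻¹ k)).1) = (fun k => (t.pos (τ⁻¹ k)).1) then 1 else 0))
        = if τ = σ then 1 else 0 := by
    intro σ hσ τ hτ
    by_cases h : τ = σ
    · rw [if_pos h, h, if_pos rfl, mul_one, sgn_sq]
    · have hcol : ∀ (υ : Equiv.Perm (Fin n)), υ ∈ colStab t →
          ∀ k, (t.pos (υ⁻¹ k)).2 = (t.pos k).2 := by
        intro υ hυ k
        have h2 := (Finset.mem_filter.mp hυ).2 (υ⁻¹ k)
        rw [Equiv.Perm.apply_inv_self] at h2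
        exact h2.symm
      rw [if_neg ?_, mul_zero, if_neg h]
      intro heq
      apply h
      have hinv : σ⁻¹ = τ⁻¹ := by
        apply Equiv.ext
        intro k
        apply t.inj
        have h1 : (t.pos (σ⁻¹ k)).1 = (t.pos (τ⁻¹ k)).1 := congrFun heq k
        have h2 : (t.pos (σ⁻¹ k)).2 = (t.pos (τ⁻¹ k)).2 := by
          rw [hcol σ hσ k, hcol τ hτ k]
        exact Prod.ext h1 h2
      exact (inv_injective hinv).symm
  rw [Finset.sum_congr rfl (fun σ hσ => Finset.sum_congr rfl (fun τ hτ => hterm σ hσ τ hτ))]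
  rw [Finset.sum_congr rfl (fun σ hσ => Finset.sum_ite_eq' (colStab t) σ (fun _ => (1:ℤ)))]
  rw [Finset.sum_congr rfl (fun σ hσ => if_pos hσ), Finset.sum_const, nsmul_eq_mul, mul_one]

def t0 (p : ℕ) : YT p where
  pos k := ((k : ℕ) / 3, (k : ℕ) % 3)
  inj := by
    intro a b hab
    have h1 : (a:ℕ)/3 = (b:ℕ)/3 := congrArg Prod.fst hab
    have h2 : (a:ℕ)%3 = (b:ℕ)%3 := congrArg Prod.snd hab
    apply Fin.ext
    omega
  mem := fun k => by
    have hk : (k:ℕ) < 3*(3*p-2) := k.2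
    have h1 : (k:ℕ)/3 < 3*p-2 := by omega
    show (k:ℕ) % 3 < if (k:ℕ)/3 < 3*p-2 then 3 else 0
    rw [if_pos h1]
    omega
  surj := fun c hc => by
    have hx : c.1 < 3*p-2 := by
      by_contra h
      rw [if_neg h] at hc
      exact Nat.not_lt_zero _ hc
    have hy : c.2 < 3 := by
      rw [if_pos hx] at hc
      exact hc
    refine ⟨⟨3*c.1 + c.2, by omega⟩, ?_⟩
    show ((3*c.1 + c.2)/3, (3*c.1 + c.2) % 3) = c
    rw [show (3*c.1 + c.2)/3 = c.1 by omega, show (3*c.1 + c.2) % 3 = c.2 by omega]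

lemma one_mem_colStab {n : ℕ} {lam : ℕ → ℕ} (t : YTableau n lam) :
    (1 : Equiv.Perm (Fin n)) ∈ colStab t := by
  rw [colStab, Finset.mem_filter]
  exact ⟨Finset.mem_univ _, fun k => rfl⟩

end SchaperAux

/-- Claim in Lemma 4.5: for an odd prime `p`, `ν_p((3^{3p-2})) ≥ 4`. -/
theorem schaper_ge_four_of_3_3pm2 (p : ℕ) (hp : p.Prime) (hodd : Odd p) :
    4 ≤ schaperNumber p (3 * (3 * p - 2)) (fun i => if i < 3 * p - 2 then 3 else 0) ∧
      ∀ s t : YTableau (3 * (3 * p - 2)) (fun i => if i < 3 * p - 2 then 3 else 0),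
        RowEquiv s t →
          (p : ℤ) ^ 4 ∣ tabloidInner (polytabloid s) (polytabloid t) := by
  have hp3 : 3 ≤ p := by
    have h2 := hp.two_le
    have hne : p ≠ 2 := by
      rintro rfl
      have := Nat.odd_iff.mp hodd
      norm_num at this
    omega
  have hmain : ∀ s t : YTableau (3 * (3 * p - 2)) (fun i => if i < 3 * p - 2 then 3 else 0),
      RowEquiv s t → (p : ℤ) ^ 4 ∣ tabloidInner (polytabloid s) (polytabloid t) :=
    fun s t hst => SchaperAux.main_dvd hp hp3 s t hst
  refine ⟨?_, hmain⟩
  apply le_csSup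
  · refine ⟨(tabloidInner (polytabloid (SchaperAux.t0 p)) (polytabloid (SchaperAux.t0 p))).natAbs,
      ?_⟩
    intro k hk
    have hdvd := hk (SchaperAux.t0 p) (SchaperAux.t0 p) (fun _ => rfl)
    have hval := SchaperAux.inner_self (SchaperAux.t0 p)
    have hpos : 0 < tabloidInner (polytabloid (SchaperAux.t0 p))
        (polytabloid (SchaperAux.t0 p)) := by
      rw [hval]
      exact_mod_cast Finset.card_pos.mpr ⟨1, SchaperAux.one_mem_colStab _⟩
    have hle : (p:ℤ)^k ≤ tabloidInner (polytabloid (SchaperAux.t0 p))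
        (polytabloid (SchaperAux.t0 p)) := Int.le_of_dvd hpos hdvd
    set V := (tabloidInner (polytabloid (SchaperAux.t0 p))
      (polytabloid (SchaperAux.t0 p))).natAbs with hV
    have hVeq : ((V : ℤ)) = tabloidInner (polytabloid (SchaperAux.t0 p))
        (polytabloid (SchaperAux.t0 p)) := Int.natAbs_of_nonneg hpos.le
    have hnat : p^k ≤ V := by
      have : ((p^k : ℕ) : ℤ) ≤ (V : ℤ) := by
        rw [hVeq]
        exact_mod_cast hle
      exact_mod_cast this
    have h2k : 2^k ≤ p^k := Nat.pow_le_pow_left hp.two_le k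
    have hk2 : k < 2^k := Nat.lt_two_pow_self (n := k)
    show k ≤ V
    omega
  · exact hmain
end

section
/- Let λ = (3,3,3) be the partition of 9. Then 8 divides ⟨e_s, e_t⟩ for every pair (s,t) of row-equivalent (3,3,3)-tableaux, i.e. ν_2((3,3,3)) ≥ 3. -/
set_option maxRecDepth 100000
set_option maxHeartbeats 4000000

namespace Schaper

def tpN (x j : ℕ) : ℕ := 77742444 / 3^(3*x+j) % 3
def tiN (x i : ℕ) : ℕ := 75695412 / 3^(3*x+i) % 3
def sgNat (x : ℕ) : ℤ := 1 - 2 * (38 / 2^x % 2 : ℕ)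
def f6N (h0 h1 h2 : ℕ) : ℤ := ((3803514820573 / 3^(9*h0+3*h1+h2) % 3 : ℕ) : ℤ) - 1
def selN (x y z k : ℕ) : ℕ := if k = 0 then x else if k = 1 then y else z
def tblP (x : Fin 6) (j : Fin 3) : Fin 3 := ⟨tpN x.val j.val, Nat.mod_lt _ (by norm_num)⟩
def tblI (x : Fin 6) (i : Fin 3) : Fin 3 := ⟨tiN x.val i.val, Nat.mod_lt _ (by norm_num)⟩
def F6 (h : Fin 3 → Fin 3) : ℤ := f6N (h 0).val (h 1).val (h 2).val
lemma tbl_li : ∀ (x : Fin 6) (i : Fin 3), tblI x (tblP x i) = i := by decide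
lemma tbl_ri : ∀ (x : Fin 6) (i : Fin 3), tblP x (tblI x i) = i := by decide
def decodeP (x : Fin 6) : Equiv.Perm (Fin 3) :=
  { toFun := tblP x, invFun := tblI x, left_inv := tbl_li x, right_inv := tbl_ri x }
lemma decodeP_inj : Function.Injective decodeP := by
  intro x y h
  have : ∀ i, tblP x i = tblP y i := fun i => congrFun (congrArg (fun (e : Equiv.Perm (Fin 3)) => (e : Fin 3 → Fin 3)) h) i
  revert this; revert x y; decide
lemma decodeP_bij : Function.Bijective decodeP :=
  (Fintype.bijective_iff_injective_and_card decodeP).mpr ⟨decodeP_inj, by simp [Fintype.card_perm]; rfl⟩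
noncomputable def decodeE : Fin 6 ≃ Equiv.Perm (Fin 3) := Equiv.ofBijective decodeP decodeP_bij
def sgnZ (p : Equiv.Perm (Fin 3)) : ℤ := ((Equiv.Perm.sign p : ℤˣ) : ℤ)
def FF (h : Fin 3 → Fin 3) : ℤ :=
  ∑ β : Equiv.Perm (Fin 3), sgnZ β * (if ∀ i, β⁻¹ i = h i then 1 else 0)
lemma sgn_decode : ∀ x : Fin 6, sgnZ (decodeP x) = sgNat x.val := by decide
lemma FF_eq_F6 : ∀ h : Fin 3 → Fin 3, FF h = F6 h := by decide
lemma decodeP_zero : decodeP 0 = 1 := by apply Equiv.ext; decide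

----------------------------------------------------------------
-- the sums
def bigSum (C : Fin 3 → Equiv.Perm (Fin 3)) : ℤ :=
  ∑ a : Fin 3 → Equiv.Perm (Fin 3), ∑ b : Fin 3 → Equiv.Perm (Fin 3),
    (∏ j, sgnZ (a j)) * ((∏ j, sgnZ (b j)) *
      (if (∀ j i : Fin 3, (b j)⁻¹ i = (a (C i j))⁻¹ i) then 1 else 0))

def redSum (C : Fin 3 → Equiv.Perm (Fin 3)) : ℤ :=
  ∑ a : Fin 3 → Equiv.Perm (Fin 3),
    (∏ j, sgnZ (a j)) * ∏ j, FF (fun i => (a (C i j))⁻¹ i)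

lemma bigSum_eq_redSum (C : Fin 3 → Equiv.Perm (Fin 3)) : bigSum C = redSum C := by
  unfold bigSum redSum
  refine Finset.sum_congr rfl fun a _ => ?_
  rw [← Finset.mul_sum]
  congr 1
  have h1 : ∀ b : Fin 3 → Equiv.Perm (Fin 3),
      (∏ j, sgnZ (b j)) * (if (∀ j i : Fin 3, (b j)⁻¹ i = (a (C i j))⁻¹ i) then (1:ℤ) else 0)
      = ∏ j, (sgnZ (b j) * if (∀ i, (b j)⁻¹ i = (a (C i j))⁻¹ i) then (1:ℤ) else 0) := by
    intro b
    rw [Finset.prod_mul_distrib, Finset.prod_boole]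
    congr 1
    simp
  rw [Finset.sum_congr rfl fun b _ => h1 b]
  rw [← Fintype.prod_sum (fun (j : Fin 3) (β : Equiv.Perm (Fin 3)) =>
    sgnZ β * if (∀ i, β⁻¹ i = (a (C i j))⁻¹ i) then (1:ℤ) else 0)]
  rfl

lemma redSum_left (α : Equiv.Perm (Fin 3)) (C : Fin 3 → Equiv.Perm (Fin 3)) :
    redSum (fun i => α * C i) = redSum C := by
  unfold redSum
  refine Fintype.sum_equiv (Equiv.arrowCongr (α.symm : Fin 3 ≃ Fin 3) (Equiv.refl _)) _ _ fun a => ?_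
  have hfun : ((Equiv.arrowCongr (α.symm : Fin 3 ≃ Fin 3) (Equiv.refl _)) a) = fun k => a (α k) :=
    funext fun k => by simp
  rw [hfun]
  have h2 : (∏ j, sgnZ (a j)) = ∏ j, sgnZ (a (α j)) :=
    (Equiv.prod_comp (α : Equiv.Perm (Fin 3)) fun j => sgnZ (a j)).symm
  rw [h2]
  rfl

def kSum (d : Fin 3 → Fin 6) : ℤ :=
  ∑ a : Fin 3 → Fin 6,
    (∏ j, sgNat (a j).val) * ∏ j, F6 (fun i => tblI (a (tblP (d i) j)) i)

lemma redSum_eq_kSum (C : Fin 3 → Equiv.Perm (Fin 3)) :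
    redSum C = kSum (fun i => decodeE.symm (C i)) := by
  unfold redSum kSum
  refine (Fintype.sum_equiv (Equiv.piCongrRight fun _ : Fin 3 => decodeE) _ _ fun a => ?_).symm
  have he : ∀ j, (Equiv.piCongrRight fun _ : Fin 3 => decodeE) a j = decodeP (a j) := fun j => rfl
  have hC : ∀ i, C i = decodeP (decodeE.symm (C i)) := fun i => (decodeE.apply_symm_apply (C i)).symm
  congr 1
  · exact Finset.prod_congr rfl fun j _ => by rw [he, sgn_decode]
  · refine Finset.prod_congr rfl fun j _ => ?_
    rw [FF_eq_F6]
    congr 1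
    funext i
    rw [he]
    congr 2
    rw [hC i]
    rfl

def gBody (d0 d1 d2 a0 a1 a2 : ℕ) : ℤ :=
  (sgNat a0 * sgNat a1 * sgNat a2) *
  (f6N (tiN (selN a0 a1 a2 (tpN d0 0)) 0) (tiN (selN a0 a1 a2 (tpN d1 0)) 1) (tiN (selN a0 a1 a2 (tpN d2 0)) 2) *
   f6N (tiN (selN a0 a1 a2 (tpN d0 1)) 0) (tiN (selN a0 a1 a2 (tpN d1 1)) 1) (tiN (selN a0 a1 a2 (tpN d2 1)) 2) *
   f6N (tiN (selN a0 a1 a2 (tpN d0 2)) 0) (tiN (selN a0 a1 a2 (tpN d1 2)) 1) (tiN (selN a0 a1 a2 (tpN d2 2)) 2))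

def kFast (d0 d1 d2 : ℕ) : ℤ :=
  ∑ a0 : Fin 6, ∑ a1 : Fin 6, ∑ a2 : Fin 6, gBody d0 d1 d2 a0.val a1.val a2.val

def emE : (Fin 6 × Fin 6 × Fin 6) ≃ (Fin 3 → Fin 6) where
  toFun p := ![p.1, p.2.1, p.2.2]
  invFun f := (f 0, f 1, f 2)
  left_inv p := rfl
  right_inv f := by
    funext i
    fin_cases i <;> rfl

lemma matrixVal (x y z : Fin 6) (m : Fin 3) :
    (![x, y, z] m).val = selN x.val y.val z.val m.val := by
  fin_cases m <;> rfl

lemma Tval (d : Fin 3 → Fin 6) (a0 a1 a2 : Fin 6) :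
    ((∏ j, sgNat ((![a0,a1,a2] : Fin 3 → Fin 6) j).val) *
      ∏ j, F6 (fun i => tblI ((![a0,a1,a2] : Fin 3 → Fin 6) (tblP (d i) j)) i))
    = gBody (d 0).val (d 1).val (d 2).val a0.val a1.val a2.val := by
  simp only [Fin.prod_univ_three, F6, tblI, tblP, matrixVal, gBody]
  rfl

lemma kSum_eq_kFast (d : Fin 3 → Fin 6) : kSum d = kFast (d 0).val (d 1).val (d 2).val := by
  unfold kSum kFast
  have h1 : (∑ a : Fin 3 → Fin 6,
      (∏ j, sgNat (a j).val) * ∏ j, F6 (fun i => tblI (a (tblP (d i) j)) i))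
      = ∑ p : Fin 6 × Fin 6 × Fin 6,
      (∏ j, sgNat ((emE p) j).val) * ∏ j, F6 (fun i => tblI ((emE p) (tblP (d i) j)) i) :=
    (Fintype.sum_equiv emE _ _ fun p => rfl).symm
  rw [h1, Fintype.sum_prod_type]
  refine Finset.sum_congr rfl fun a0 _ => ?_
  rw [Fintype.sum_prod_type]
  refine Finset.sum_congr rfl fun a1 _ => Finset.sum_congr rfl fun a2 _ => ?_
  exact Tval d a0 a1 a2

lemma key : ∀ x y : Fin 6, (8:ℤ) ∣ kFast 0 x.val y.val := by decide

lemma kFast_val : kFast 0 0 0 = 216 := by decide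

lemma decodeE_symm_one : decodeE.symm 1 = 0 := by
  rw [Equiv.symm_apply_eq]
  exact decodeP_zero.symm

lemma bigSum_div (C : Fin 3 → Equiv.Perm (Fin 3)) : (8:ℤ) ∣ bigSum C := by
  rw [bigSum_eq_redSum, ← redSum_left (C 0)⁻¹ C, redSum_eq_kSum, kSum_eq_kFast]
  have h0 : decodeE.symm ((C 0)⁻¹ * C 0) = (0 : Fin 6) := by
    rw [inv_mul_cancel]
    exact decodeE_symm_one
  have hg : (fun i => decodeE.symm ((fun i => (C 0)⁻¹ * C i) i)) 0 = (0 : Fin 6) := h0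
  rw [show ((fun i => decodeE.symm ((fun i => (C 0)⁻¹ * C i) i)) 0).val = (0:ℕ) by rw [hg]; rfl]
  exact key _ _

lemma bigSum_one : bigSum (fun _ => 1) = 216 := by
  rw [bigSum_eq_redSum, redSum_eq_kSum, kSum_eq_kFast]
  have h0 : ∀ i : Fin 3, (fun i : Fin 3 => decodeE.symm ((fun _ : Fin 3 => (1 : Equiv.Perm (Fin 3))) i)) i = (0 : Fin 6) :=
    fun i => decodeE_symm_one
  rw [show ((fun i : Fin 3 => decodeE.symm ((fun _ : Fin 3 => (1 : Equiv.Perm (Fin 3))) i)) 0).val = (0:ℕ) by rw [h0 0]; rfl]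
  exact kFast_val


----------------------------------------------------------------
-- tableau side

lemma tabloidInner_single {n : ℕ} (x : Fin n → ℕ) (c : ℤ) (g : (Fin n → ℕ) →₀ ℤ) :
    tabloidInner (Finsupp.single x c) g = c * g x :=
  Finsupp.sum_single_index (zero_mul _)

lemma tabloidInner_sum_left {n : ℕ} {ι : Type*} (I : Finset ι)
    (f : ι → ((Fin n → ℕ) →₀ ℤ)) (g : (Fin n → ℕ) →₀ ℤ) :
    tabloidInner (∑ i ∈ I, f i) g = ∑ i ∈ I, tabloidInner (f i) g := by
  have hadd : ∀ f₁ f₂ : (Fin n → ℕ) →₀ ℤ,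
      tabloidInner (f₁ + f₂) g = tabloidInner f₁ g + tabloidInner f₂ g := by
    intro f₁ f₂
    exact Finsupp.sum_add_index' (fun x => zero_mul _) (fun x a b => add_mul a b _)
  exact map_sum (AddMonoidHom.mk' (fun f => tabloidInner f g) hadd) f I

lemma polytabloid_apply {n : ℕ} {lam : ℕ → ℕ} (t : YTableau n lam) (x : Fin n → ℕ) :
    polytabloid t x = ∑ τ ∈ colStab t,
      ((Equiv.Perm.sign τ : ℤˣ) : ℤ) * (if (fun k => (t.pos (τ⁻¹ k)).1) = x then 1 else 0) := by
  rw [polytabloid, Finsupp.finset_sum_apply]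
  refine Finset.sum_congr rfl fun τ _ => ?_
  rw [Finsupp.smul_apply, Finsupp.single_apply, smul_eq_mul]

lemma inner_expand {n : ℕ} {lam : ℕ → ℕ} (s t : YTableau n lam) :
    tabloidInner (polytabloid s) (polytabloid t)
    = ∑ σ ∈ colStab s, ∑ τ ∈ colStab t,
        ((Equiv.Perm.sign σ : ℤˣ) : ℤ) * (((Equiv.Perm.sign τ : ℤˣ) : ℤ) *
          (if (fun k => (t.pos (τ⁻¹ k)).1) = (fun k => (s.pos (σ⁻¹ k)).1) then 1 else 0)) := by
  rw [polytabloid, tabloidInner_sum_left]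
  refine Finset.sum_congr rfl fun σ _ => ?_
  rw [Finsupp.smul_single, smul_eq_mul, mul_one, tabloidInner_single, polytabloid_apply,
    Finset.mul_sum]

----------------------------------------------------------------
-- structure of (3,3,3)-tableaux

variable (t : YTableau 9 (fun i => if i < 3 then 3 else 0))

lemma row_lt (k : Fin 9) : (t.pos k).1 < 3 := by
  by_contra h
  have := t.mem k
  simp only [if_neg h] at this
  omega

lemma col_lt (k : Fin 9) : (t.pos k).2 < 3 := by
  have := t.mem k
  rwa [if_pos (row_lt t k)] at this

def rowF (k : Fin 9) : Fin 3 := ⟨(t.pos k).1, row_lt t k⟩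
def colF (k : Fin 9) : Fin 3 := ⟨(t.pos k).2, col_lt t k⟩

lemma rc_inj : Function.Injective (fun k => (rowF t k, colF t k)) := by
  intro k k' h
  simp only [Prod.mk.injEq, rowF, colF, Fin.mk.injEq] at h
  exact t.inj (Prod.ext h.1 h.2)

noncomputable def EqT : Fin 9 ≃ Fin 3 × Fin 3 :=
  Equiv.ofBijective (fun k => (rowF t k, colF t k))
    ((Fintype.bijective_iff_injective_and_card _).mpr ⟨rc_inj t, by simp⟩)

lemma EqT_apply (k : Fin 9) : EqT t k = (rowF t k, colF t k) := rfl

lemma EqT_symm_row (i j : Fin 3) : rowF t ((EqT t).symm (i, j)) = i := by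
  have := (EqT t).apply_symm_apply (i, j)
  rw [EqT_apply] at this
  exact congrArg Prod.fst this

lemma EqT_symm_col (i j : Fin 3) : colF t ((EqT t).symm (i, j)) = j := by
  have := (EqT t).apply_symm_apply (i, j)
  rw [EqT_apply] at this
  exact congrArg Prod.snd this

----------------------------------------------------------------
-- the embedding of (Fin 3 → Perm (Fin 3)) into colStab

noncomputable def Phi (a : Fin 3 → Equiv.Perm (Fin 3)) : Equiv.Perm (Fin 9) :=
  (EqT t).symm.permCongr (Equiv.prodCongrLeft a)

lemma Phi_E (a : Fin 3 → Equiv.Perm (Fin 3)) (k : Fin 9) :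
    EqT t (Phi t a k) = (a (colF t k) (rowF t k), colF t k) := by
  have h1 : Phi t a k = (EqT t).symm ((Equiv.prodCongrLeft a) (EqT t k)) := by
    rw [Phi, Equiv.permCongr_apply, Equiv.symm_symm]
  rw [h1, Equiv.apply_symm_apply, EqT_apply]
  rfl

lemma Phi_row (a : Fin 3 → Equiv.Perm (Fin 3)) (k : Fin 9) :
    rowF t (Phi t a k) = a (colF t k) (rowF t k) := by
  have := Phi_E t a k
  rw [EqT_apply] at this
  exact congrArg Prod.fst this

lemma Phi_col (a : Fin 3 → Equiv.Perm (Fin 3)) (k : Fin 9) :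
    colF t (Phi t a k) = colF t k := by
  have := Phi_E t a k
  rw [EqT_apply] at this
  exact congrArg Prod.snd this

lemma Phi_one : Phi t (fun _ => 1) = 1 := by
  apply Equiv.ext
  intro k
  apply (EqT t).injective
  rw [Phi_E]
  rfl

lemma Phi_mul (a b : Fin 3 → Equiv.Perm (Fin 3)) :
    Phi t a * Phi t b = Phi t (fun j => a j * b j) := by
  apply Equiv.ext
  intro k
  apply (EqT t).injective
  rw [Equiv.Perm.mul_apply, Phi_E, Phi_row, Phi_col, Phi_E]
  rfl

lemma Phi_inv (a : Fin 3 → Equiv.Perm (Fin 3)) :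
    (Phi t a)⁻¹ = Phi t (fun j => (a j)⁻¹) := by
  apply inv_eq_of_mul_eq_one_right
  rw [Phi_mul]
  have : (fun j => a j * (a j)⁻¹) = fun _ : Fin 3 => (1 : Equiv.Perm (Fin 3)) := by
    funext j; group
  rw [this, Phi_one]

lemma Phi_mem (a : Fin 3 → Equiv.Perm (Fin 3)) : Phi t a ∈ colStab t := by
  rw [colStab, Finset.mem_filter]
  exact ⟨Finset.mem_univ _, fun k => congrArg Fin.val (Phi_col t a k)⟩

lemma Phi_inj : Function.Injective (Phi t) := by
  intro a a' h
  funext j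
  apply Equiv.ext
  intro i
  set k := (EqT t).symm (i, j) with hk
  have h1 : rowF t (Phi t a k) = rowF t (Phi t a' k) := by rw [h]
  rw [Phi_row, Phi_row, EqT_symm_row, EqT_symm_col] at h1
  exact h1

lemma colStab_eq_image : colStab t = Finset.image (Phi t) Finset.univ := by
  ext σ
  simp only [Finset.mem_image, Finset.mem_univ, true_and]
  constructor
  · intro hσ
    rw [colStab, Finset.mem_filter] at hσ
    have hcol : ∀ k, colF t (σ k) = colF t k := fun k => Fin.ext (hσ.2 k)
    have hinj : ∀ j : Fin 3, Function.Injective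
        (fun i => rowF t (σ ((EqT t).symm (i, j)))) := by
      intro j i i' h
      have h2 : colF t (σ ((EqT t).symm (i, j))) = colF t (σ ((EqT t).symm (i', j))) := by
        rw [hcol, hcol, EqT_symm_col, EqT_symm_col]
      have h' : rowF t (σ ((EqT t).symm (i, j))) = rowF t (σ ((EqT t).symm (i', j))) := h
      have h3 : EqT t (σ ((EqT t).symm (i, j))) = EqT t (σ ((EqT t).symm (i', j))) := by
        rw [EqT_apply, EqT_apply, h', h2]
      have h4 := (EqT t).injective h3
      have h5 := σ.injective h4
      have h6 := (EqT t).symm.injective h5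
      exact congrArg Prod.fst h6
    refine ⟨fun j => Equiv.ofBijective _ ((Finite.injective_iff_bijective).mp (hinj j)), ?_⟩
    apply Equiv.ext
    intro k
    apply (EqT t).injective
    rw [Phi_E]
    have h7 : (EqT t).symm (rowF t k, colF t k) = k := by
      rw [← EqT_apply, Equiv.symm_apply_apply]
    have h8 : (Equiv.ofBijective _ ((Finite.injective_iff_bijective).mp (hinj (colF t k)))) (rowF t k)
        = rowF t (σ k) := by
      show rowF t (σ ((EqT t).symm (rowF t k, colF t k))) = rowF t (σ k)
      rw [h7]
    rw [h8, EqT_apply, hcol]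
  · rintro ⟨a, rfl⟩
    exact Phi_mem t a

lemma sign_Phi (a : Fin 3 → Equiv.Perm (Fin 3)) :
    ((Equiv.Perm.sign (Phi t a) : ℤˣ) : ℤ) = ∏ j, sgnZ (a j) := by
  rw [Phi, Equiv.Perm.sign_permCongr, Equiv.Perm.sign_prodCongrLeft]
  push_cast
  rfl

----------------------------------------------------------------
-- main reduction

lemma exists_C (s t : YTableau 9 (fun i => if i < 3 then 3 else 0)) (hre : RowEquiv s t) :
    ∃ C : Fin 3 → Equiv.Perm (Fin 3),
      (∀ i j : Fin 3, C i j = colF s ((EqT t).symm (i, j))) ∧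
      tabloidInner (polytabloid s) (polytabloid t) = bigSum C := by
  have hrow : ∀ k, rowF s k = rowF t k := fun k => Fin.ext (hre k)
  have hCinj : ∀ i : Fin 3, Function.Injective (fun j => colF s ((EqT t).symm (i, j))) := by
    intro i j j' h
    have h' : colF s ((EqT t).symm (i, j)) = colF s ((EqT t).symm (i, j')) := h
    have hr : rowF s ((EqT t).symm (i, j)) = rowF s ((EqT t).symm (i, j')) := by
      rw [hrow, hrow, EqT_symm_row, EqT_symm_row]
    have h3 : EqT s ((EqT t).symm (i, j)) = EqT s ((EqT t).symm (i, j')) := by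
      rw [EqT_apply, EqT_apply, h', hr]
    have h4 := (EqT t).symm.injective ((EqT s).injective h3)
    exact congrArg Prod.snd h4
  refine ⟨fun i => Equiv.ofBijective _ ((Finite.injective_iff_bijective).mp (hCinj i)), fun i j => rfl, ?_⟩
  set C : Fin 3 → Equiv.Perm (Fin 3) :=
    fun i => Equiv.ofBijective _ ((Finite.injective_iff_bijective).mp (hCinj i)) with hC
  have hCspec : ∀ i j, C i j = colF s ((EqT t).symm (i, j)) := fun i j => rfl
  have hCk : ∀ k, colF s k = C (rowF t k) (colF t k) := by
    intro k
    rw [hCspec]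
    congr 1
    rw [← EqT_apply, Equiv.symm_apply_apply]
  -- the condition equivalence
  have hcond : ∀ (a b : Fin 3 → Equiv.Perm (Fin 3)),
      ((fun k => (t.pos ((Phi t b)⁻¹ k)).1) = fun k => (s.pos ((Phi s a)⁻¹ k)).1)
      ↔ (∀ j i : Fin 3, (b j)⁻¹ i = (a (C i j))⁻¹ i) := by
    intro a b
    rw [funext_iff]
    have lhs_k : ∀ k, (t.pos ((Phi t b)⁻¹ k)).1 = ((b (colF t k))⁻¹ (rowF t k)).val := by
      intro k
      rw [Phi_inv]
      have : rowF t (Phi t (fun j => (b j)⁻¹) k) = (b (colF t k))⁻¹ (rowF t k) := Phi_row t _ k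
      exact congrArg Fin.val this
    have rhs_k : ∀ k, (s.pos ((Phi s a)⁻¹ k)).1 = ((a (C (rowF t k) (colF t k)))⁻¹ (rowF t k)).val := by
      intro k
      rw [Phi_inv]
      have : rowF s (Phi s (fun j => (a j)⁻¹) k) = (a (colF s k))⁻¹ (rowF s k) := Phi_row s _ k
      rw [hCk k, hrow k] at this
      exact congrArg Fin.val this
    constructor
    · intro h j i
      have hk := h ((EqT t).symm (i, j))
      rw [lhs_k, rhs_k, EqT_symm_row, EqT_symm_col] at hk
      exact Fin.ext hk
    · intro h k
      rw [lhs_k, rhs_k]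
      exact congrArg Fin.val (h (colF t k) (rowF t k))
  -- assemble
  rw [inner_expand, colStab_eq_image s, colStab_eq_image t,
    Finset.sum_image (fun a _ a' _ h => Phi_inj s h),
    bigSum]
  refine Finset.sum_congr rfl fun a _ => ?_
  rw [Finset.sum_image (fun b _ b' _ h => Phi_inj t h)]
  refine Finset.sum_congr rfl fun b _ => ?_
  rw [sign_Phi, sign_Phi]
  congr 1
  congr 1
  exact if_congr (hcond a b) rfl rfl

lemma self_inner (t : YTableau 9 (fun i => if i < 3 then 3 else 0)) :
    tabloidInner (polytabloid t) (polytabloid t) = bigSum (fun _ => 1) := by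
  obtain ⟨C, hspec, heq⟩ := exists_C t t (fun k => rfl)
  rw [heq]
  congr 1
  funext i
  apply Equiv.ext
  intro j
  rw [hspec i j, EqT_symm_col]
  rfl

def t0 : YTableau 9 (fun i => if i < 3 then 3 else 0) where
  pos k := (k.val / 3, k.val % 3)
  inj := by
    intro k k' h
    have h1 : k.val / 3 = k'.val / 3 := congrArg Prod.fst h
    have h2 : k.val % 3 = k'.val % 3 := congrArg Prod.snd h
    apply Fin.ext
    omega
  mem := by
    intro k
    have : k.val < 9 := k.isLt
    have h1 : k.val / 3 < 3 := by omega
    simp only [if_pos h1]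
    omega
  surj := by
    intro c hc
    by_cases h1 : c.1 < 3
    · rw [if_pos h1] at hc
      refine ⟨⟨3 * c.1 + c.2, by omega⟩, ?_⟩
      have e1 : (3 * c.1 + c.2) / 3 = c.1 := by omega
      have e2 : (3 * c.1 + c.2) % 3 = c.2 := by omega
      exact Prod.ext e1 e2
    · rw [if_neg h1] at hc
      omega


end Schaper

open Schaper

/-- `ν_2((3,3,3)) ≥ 3`: `8` divides `⟨e_s, e_t⟩` for all row-equivalent `(3,3,3)`-tableaux. -/
theorem schaper_333 :
    (∀ s t : YTableau 9 (fun i => if i < 3 then 3 else 0), RowEquiv s t →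
        (8 : ℤ) ∣ tabloidInner (polytabloid s) (polytabloid t)) ∧
      3 ≤ schaperNumber 2 9 (fun i => if i < 3 then 3 else 0) := by
  have part1 : ∀ s t : YTableau 9 (fun i => if i < 3 then 3 else 0), RowEquiv s t →
      (8 : ℤ) ∣ tabloidInner (polytabloid s) (polytabloid t) := by
    intro s t h
    obtain ⟨C, _, heq⟩ := exists_C s t h
    rw [heq]
    exact bigSum_div C
  refine ⟨part1, ?_⟩
  rw [schaperNumber]
  apply le_csSup
  · refine ⟨7, fun k hk => ?_⟩
    have hd := hk t0 t0 (fun k => rfl)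
    rw [self_inner, bigSum_one] at hd
    have hle : ((2:ℕ):ℤ)^k ≤ 216 := Int.le_of_dvd (by norm_num) hd
    by_contra hlt
    push_neg at hlt
    have h8 : ((2:ℕ):ℤ)^8 ≤ ((2:ℕ):ℤ)^k := pow_le_pow_right₀ (by norm_num) (by omega)
    norm_num at h8 hle
    linarith
  · show ∀ s t : YTableau 9 (fun i => if i < 3 then 3 else 0), RowEquiv s t →
      ((2:ℕ):ℤ)^3 ∣ tabloidInner (polytabloid s) (polytabloid t)
    intro s t h
    have := part1 s t h
    norm_num
    exact this
end

section
/- Let λ = (2,2,2,2) be the partition of 8. Then 16 divides ⟨e_s, e_t⟩ for every pair (s,t) of row-equivalent (2,2,2,2)-tableaux, i.e. ν_2((2,2,2,2)) ≥ 4. -/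
open Equiv Equiv.Perm Finset

set_option maxRecDepth 8000

namespace Schaper2222

abbrev P4 := Equiv.Perm (Fin 4)

lemma perm_inv_apply_self {α : Type*} (e : Perm α) (x : α) : e⁻¹ (e x) = x :=
  e.symm_apply_apply x

lemma perm_apply_inv_self {α : Type*} (e : Perm α) (x : α) : e (e⁻¹ x) = x :=
  e.apply_symm_apply x

/-- Total version of `Equiv.ofBijective`. -/
noncomputable def mkPerm (f : Fin 4 → Fin 4) : P4 :=
  if h : Function.Bijective f then Equiv.ofBijective f h else 1

lemma mkPerm_apply {f : Fin 4 → Fin 4} (h : Function.Bijective f) (i : Fin 4) :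
    mkPerm f i = f i := by
  rw [mkPerm, dif_pos h]; rfl

lemma mkPerm_coe (g : P4) : mkPerm (⇑g) = g :=
  Equiv.ext fun i => mkPerm_apply g.bijective i

lemma bij_of_inj {f : Fin 4 → Fin 4} (h : Function.Injective f) : Function.Bijective f :=
  Finite.injective_iff_bijective.mp h

variable (F : Fin 4 → Bool)

/-- The stabiliser of the boolean colouring `F`, as a finset of permutations. -/
def stabF : Finset P4 := univ.filter fun z => ∀ i, F (z i) = F i

/-- Mixing condition between `u` and `v`. -/
def Cond (u v : P4 × P4) : Prop :=
  ∀ i, u.1⁻¹ i = (if F i then v.2⁻¹ i else v.1⁻¹ i) ∧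
       u.2⁻¹ i = (if F i then v.1⁻¹ i else v.2⁻¹ i)

instance (u v : P4 × P4) : Decidable (Cond F u v) := by
  unfold Cond; infer_instance

lemma zF_bij {z : P4} (hz : ∀ i, F (z i) = F i) :
    Function.Bijective (fun i => if F i then z i else i) := by
  refine bij_of_inj ?_
  intro a b hab
  simp only at hab
  by_cases ha : F a <;> by_cases hb : F b <;> simp [ha, hb] at hab
  · exact hab
  · exfalso; have h2 := hz a; rw [hab, ha] at h2; exact hb h2
  · exfalso; have h2 := hz b; rw [← hab, hb] at h2; exact ha h2
  · exact hab

lemma zFc_bij {z : P4} (hz : ∀ i, F (z i) = F i) :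
    Function.Bijective (fun i => if F i then i else z i) := by
  refine bij_of_inj ?_
  intro a b hab
  simp only at hab
  by_cases ha : F a <;> by_cases hb : F b <;> simp [ha, hb] at hab
  · exact hab
  · exfalso; have h2 := hz b; rw [← hab, ha] at h2; exact hb h2.symm
  · exfalso; have h2 := hz a; rw [hab, hb] at h2; exact ha h2.symm
  · exact hab

noncomputable def zF (z : P4) : P4 := mkPerm (fun i => if F i then z i else i)
noncomputable def zFc (z : P4) : P4 := mkPerm (fun i => if F i then i else z i)

lemma zF_apply {z : P4} (hz : ∀ i, F (z i) = F i) (i : Fin 4) :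
    zF F z i = if F i then z i else i := mkPerm_apply (zF_bij F hz) i

lemma zFc_apply {z : P4} (hz : ∀ i, F (z i) = F i) (i : Fin 4) :
    zFc F z i = if F i then i else z i := mkPerm_apply (zFc_bij F hz) i

lemma zF_mul_zFc {z : P4} (hz : ∀ i, F (z i) = F i) : zF F z * zFc F z = z := by
  ext i
  rw [Perm.mul_apply, zFc_apply F hz, zF_apply F hz]
  by_cases hi : F i
  · simp [hi]
  · have h2 : F (z i) = F i := hz i
    simp [hi, h2]


lemma cond_stab {u v : P4 × P4} (hc : Cond F u v) :
    ∀ i, F ((u.1 * u.2⁻¹) i) = F i := by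
  intro i
  by_cases hFi : F i
  · have h1 : u.2⁻¹ i = v.1⁻¹ i := by have := (hc i).2; rwa [if_pos hFi] at this
    by_cases hFm : F ((u.1 * u.2⁻¹) i)
    · rw [hFm, hFi]
    · exfalso
      have h2 : u.1⁻¹ ((u.1 * u.2⁻¹) i) = v.1⁻¹ ((u.1 * u.2⁻¹) i) := by
        have := (hc ((u.1 * u.2⁻¹) i)).1; rwa [if_neg hFm] at this
      have h3 : u.1⁻¹ ((u.1 * u.2⁻¹) i) = v.1⁻¹ i := by
        rw [Perm.mul_apply, perm_inv_apply_self, h1]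
      have h4 : (u.1 * u.2⁻¹) i = i := v.1⁻¹.injective (h3 ▸ h2 ▸ rfl)
      rw [h4] at hFm; exact hFm hFi
  · have h1 : u.2⁻¹ i = v.2⁻¹ i := by have := (hc i).2; rwa [if_neg hFi] at this
    by_cases hFm : F ((u.1 * u.2⁻¹) i)
    · exfalso
      have h2 : u.1⁻¹ ((u.1 * u.2⁻¹) i) = v.2⁻¹ ((u.1 * u.2⁻¹) i) := by
        have := (hc ((u.1 * u.2⁻¹) i)).1; rwa [if_pos hFm] at this
      have h3 : u.1⁻¹ ((u.1 * u.2⁻¹) i) = v.2⁻¹ i := by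
        rw [Perm.mul_apply, perm_inv_apply_self, h1]
      have h4 : (u.1 * u.2⁻¹) i = i := v.2⁻¹.injective (h3 ▸ h2 ▸ rfl)
      rw [h4] at hFm; exact hFi hFm
    · simp only [Bool.not_eq_true] at hFm hFi; rw [hFm, hFi]

lemma cond_v1 {u v : P4 × P4} (hc : Cond F u v) :
    v.1 = (zF F (u.1 * u.2⁻¹))⁻¹ * u.1 := by
  have hz := cond_stab F hc
  have key : v.1⁻¹ = u.1⁻¹ * zF F (u.1 * u.2⁻¹) := by
    refine Equiv.ext fun i => ?_
    rw [Perm.mul_apply, zF_apply F hz]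
    by_cases hFi : F i
    · rw [if_pos hFi]
      have h1 := (hc i).2; rw [if_pos hFi] at h1
      rw [Perm.mul_apply, perm_inv_apply_self, h1]
    · rw [if_neg hFi]
      have h1 := (hc i).1; rw [if_neg hFi] at h1
      exact h1.symm
  rw [← inv_inv v.1, key, mul_inv_rev, inv_inv]

lemma cond_v2 {u v : P4 × P4} (hc : Cond F u v) :
    v.2 = (zFc F (u.1 * u.2⁻¹))⁻¹ * u.1 := by
  have hz := cond_stab F hc
  have key : v.2⁻¹ = u.1⁻¹ * zFc F (u.1 * u.2⁻¹) := by
    refine Equiv.ext fun i => ?_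
    rw [Perm.mul_apply, zFc_apply F hz]
    by_cases hFi : F i
    · rw [if_pos hFi]
      have h1 := (hc i).1; rw [if_pos hFi] at h1
      exact h1.symm
    · rw [if_neg hFi]
      have h1 := (hc i).2; rw [if_neg hFi] at h1
      rw [Perm.mul_apply, perm_inv_apply_self, h1]
  rw [← inv_inv v.2, key, mul_inv_rev, inv_inv]

lemma units_helper (a b c : ℤˣ) : a * (b * c * a) * (b * a) * (c * a) = 1 := by
  rcases Int.units_eq_one_or a with ha | ha <;> rcases Int.units_eq_one_or b with hb | hb <;>
    rcases Int.units_eq_one_or c with hc | hc <;> subst ha <;> subst hb <;> subst hc <;> decide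

lemma cond_sign {u v : P4 × P4} (hc : Cond F u v) :
    sign u.1 * sign u.2 * (sign v.1 * sign v.2) = 1 := by
  have hz := cond_stab F hc
  set z : P4 := u.1 * u.2⁻¹ with hzdef
  have hu2 : u.2 = z⁻¹ * u.1 := by rw [hzdef]; group
  have hs : sign z = sign (zF F z) * sign (zFc F z) := by
    rw [← map_mul, zF_mul_zFc F hz]
  calc sign u.1 * sign u.2 * (sign v.1 * sign v.2)
      = sign u.1 * sign (z⁻¹ * u.1) *
        (sign ((zF F z)⁻¹ * u.1) * sign ((zFc F z)⁻¹ * u.1)) := by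
        rw [← hu2, ← cond_v1 F hc, ← cond_v2 F hc]
    _ = sign u.1 * (sign (zF F z) * sign (zFc F z) * sign u.1) *
        (sign (zF F z) * sign u.1) * (sign (zFc F z) * sign u.1) := by
        rw [map_mul, map_mul, map_mul, sign_inv, sign_inv, sign_inv, hs, ← mul_assoc]
    _ = 1 := units_helper _ _ _

lemma card_univ_P4 : (univ : Finset P4).card = 24 := by
  rw [Finset.card_univ, Fintype.card_perm, Fintype.card_fin]
  norm_num [Nat.factorial]

lemma card_cond :
    (univ.filter (fun w : (P4 × P4) × (P4 × P4) => Cond F w.1 w.2)).card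
      = 24 * (stabF F).card := by
  have h := Finset.card_nbij'
    (i := fun w : (P4 × P4) × (P4 × P4) => (w.1.1, w.1.1 * w.1.2⁻¹))
    (j := fun cz : P4 × P4 =>
      ((cz.1, cz.2⁻¹ * cz.1), ((zF F cz.2)⁻¹ * cz.1, (zFc F cz.2)⁻¹ * cz.1)))
    (s := univ.filter (fun w : (P4 × P4) × (P4 × P4) => Cond F w.1 w.2))
    (t := univ ×ˢ stabF F) ?_ ?_ ?_ ?_
  · rw [h, Finset.card_product, card_univ_P4]
  · -- hi
    intro w hw
    rw [Finset.mem_coe, Finset.mem_filter] at hw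
    rw [Finset.mem_coe, Finset.mem_product]
    exact ⟨Finset.mem_univ _, by
      rw [stabF, Finset.mem_filter]
      exact ⟨Finset.mem_univ _, cond_stab F hw.2⟩⟩
  · -- hj
    intro cz hcz
    rw [Finset.mem_coe, Finset.mem_product, stabF, Finset.mem_filter] at hcz
    have hz : ∀ i, F (cz.2 i) = F i := hcz.2.2
    rw [Finset.mem_coe, Finset.mem_filter]
    refine ⟨Finset.mem_univ _, ?_⟩
    intro i
    constructor
    · show cz.1⁻¹ i = _
      by_cases hFi : F i
      · rw [if_pos hFi]
        show _ = ((zFc F cz.2)⁻¹ * cz.1)⁻¹ i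
        rw [mul_inv_rev, inv_inv, Perm.mul_apply, zFc_apply F hz, if_pos hFi]
      · rw [if_neg hFi]
        show _ = ((zF F cz.2)⁻¹ * cz.1)⁻¹ i
        rw [mul_inv_rev, inv_inv, Perm.mul_apply, zF_apply F hz, if_neg hFi]
    · show (cz.2⁻¹ * cz.1)⁻¹ i = _
      rw [mul_inv_rev, inv_inv, Perm.mul_apply]
      by_cases hFi : F i
      · rw [if_pos hFi]
        show _ = ((zF F cz.2)⁻¹ * cz.1)⁻¹ i
        rw [mul_inv_rev, inv_inv, Perm.mul_apply, zF_apply F hz, if_pos hFi]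
      · rw [if_neg hFi]
        show _ = ((zFc F cz.2)⁻¹ * cz.1)⁻¹ i
        rw [mul_inv_rev, inv_inv, Perm.mul_apply, zFc_apply F hz, if_neg hFi]
  · -- left_inv
    intro w hw
    rw [Finset.mem_coe, Finset.mem_filter] at hw
    have hc := hw.2
    have e1 : (w.1.1 * w.1.2⁻¹)⁻¹ * w.1.1 = w.1.2 := by group
    have e2 : (zF F (w.1.1 * w.1.2⁻¹))⁻¹ * w.1.1 = w.2.1 := (cond_v1 F hc).symm
    have e3 : (zFc F (w.1.1 * w.1.2⁻¹))⁻¹ * w.1.1 = w.2.2 := (cond_v2 F hc).symm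
    obtain ⟨⟨u1, u2⟩, v1, v2⟩ := w
    simp only [Prod.mk.injEq]
    exact ⟨⟨trivial, e1⟩, e2, e3⟩
  · -- right_inv
    intro cz hcz
    show (cz.1, cz.1 * (cz.2⁻¹ * cz.1)⁻¹) = cz
    have : cz.1 * (cz.2⁻¹ * cz.1)⁻¹ = cz.2 := by group
    rw [this]

lemma core_sum :
    (∑ u : P4 × P4, ∑ v : P4 × P4,
      (if Cond F u v then ((sign u.1 * sign u.2 * (sign v.1 * sign v.2) : ℤˣ) : ℤ) else 0))
      = 24 * (stabF F).card := by
  rw [← Finset.sum_product' (s := (univ : Finset (P4 × P4))) (t := (univ : Finset (P4 × P4)))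
    (f := fun u v => if Cond F u v then
      ((sign u.1 * sign u.2 * (sign v.1 * sign v.2) : ℤˣ) : ℤ) else 0)]
  rw [Finset.univ_product_univ, ← Finset.sum_filter]
  have : ∀ w ∈ univ.filter (fun w : (P4 × P4) × (P4 × P4) => Cond F w.1 w.2),
      ((sign w.1.1 * sign w.1.2 * (sign w.2.1 * sign w.2.2) : ℤˣ) : ℤ) = 1 := by
    intro w hw
    rw [Finset.mem_filter] at hw
    rw [cond_sign F hw.2]; rfl
  rw [Finset.sum_congr rfl this, Finset.sum_const, card_cond F]
  simp

lemma stabF_one_mem : (1 : P4) ∈ stabF F := by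
  rw [stabF, Finset.mem_filter]; exact ⟨Finset.mem_univ _, fun i => rfl⟩

lemma stabF_pos : 0 < (stabF F).card :=
  Finset.card_pos.mpr ⟨1, stabF_one_mem F⟩

def stabSub : Subgroup P4 where
  carrier := {z | ∀ i, F (z i) = F i}
  one_mem' := fun _ => rfl
  mul_mem' := by intro a b ha hb i; rw [Perm.mul_apply, ha, hb]
  inv_mem' := by
    intro a ha i
    have := ha (a⁻¹ i)
    rw [perm_apply_inv_self] at this
    exact this.symm

lemma stabF_even : Even (stabF F).card := by
  obtain ⟨i, j, hij, hFij⟩ := Fintype.exists_ne_map_eq_of_card_lt F (by simp)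
  have hw : Equiv.swap i j ∈ stabSub F := by
    intro x
    rcases eq_or_ne x i with rfl | hxi
    · rw [Equiv.swap_apply_left]; exact hFij.symm
    rcases eq_or_ne x j with rfl | hxj
    · rw [Equiv.swap_apply_right]; exact hFij
    · rw [Equiv.swap_apply_of_ne_of_ne hxi hxj]
  letI : Fintype (stabSub F) := Fintype.ofFinset (stabF F) (by
    intro z
    rw [stabF, Finset.mem_filter]
    simp only [Finset.mem_univ, true_and]
    rfl)
  have h2 : (2 : ℕ) ∣ Fintype.card (stabSub F) := by
    have ho : orderOf (⟨Equiv.swap i j, hw⟩ : stabSub F) = 2 := by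
      apply orderOf_eq_prime
      · apply Subtype.ext
        rw [SubmonoidClass.coe_pow]
        show Equiv.swap i j ^ 2 = 1
        rw [sq, Equiv.swap_mul_self]
      · intro hcontra
        have : Equiv.swap i j = 1 := congrArg Subtype.val hcontra
        have h6 := congrArg (fun (σ : P4) => σ i) this
        simp only [Equiv.swap_apply_left, Perm.one_apply] at h6
        exact hij h6.symm
    rw [← ho]
    exact orderOf_dvd_card
  have h3 : Fintype.card (stabSub F) = (stabF F).card := Fintype.card_ofFinset _ _
  rw [even_iff_two_dvd, ← h3]
  exact h2


abbrev lam4 : ℕ → ℕ := fun i => if i < 4 then 2 else 0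

variable (s t : YTableau 8 lam4)

lemma rowlt (k : Fin 8) : (s.pos k).1 < 4 := by
  have h := s.mem k
  by_contra hge
  rw [show lam4 (s.pos k).1 = 0 from if_neg hge] at h
  omega

lemma collt (k : Fin 8) : (s.pos k).2 < 2 := by
  have h := s.mem k
  by_cases h4 : (s.pos k).1 < 4
  · rwa [show lam4 (s.pos k).1 = 2 from if_pos h4] at h
  · rw [show lam4 (s.pos k).1 = 0 from if_neg h4] at h; omega

/-- The grid coordinates of an entry, relative to `s`. -/
noncomputable def grid : Fin 8 ≃ Fin 4 × Fin 2 :=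
  Equiv.ofBijective (fun k => (⟨(s.pos k).1, rowlt s k⟩, ⟨(s.pos k).2, collt s k⟩))
    ⟨by
      intro a b hab
      apply s.inj
      rw [Prod.ext_iff] at hab ⊢
      obtain ⟨h1, h2⟩ := hab
      exact ⟨congrArg Fin.val h1, congrArg Fin.val h2⟩,
     by
      rintro ⟨i, j⟩
      obtain ⟨k, hk⟩ := s.surj (i.val, j.val)
        (by show (j : ℕ) < lam4 i; rw [show lam4 i = 2 from if_pos i.isLt]; exact j.isLt)
      refine ⟨k, ?_⟩
      rw [Prod.ext_iff]
      constructor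
      · apply Fin.ext; show (s.pos k).1 = (i : ℕ); rw [hk]
      · apply Fin.ext; show (s.pos k).2 = (j : ℕ); rw [hk]⟩

lemma grid_fst (k : Fin 8) : ((grid s k).1 : ℕ) = (s.pos k).1 := rfl

lemma grid_snd (k : Fin 8) : ((grid s k).2 : ℕ) = (s.pos k).2 := rfl

lemma pos_symm (x : Fin 4 × Fin 2) :
    s.pos ((grid s).symm x) = ((x.1 : ℕ), (x.2 : ℕ)) := by
  have h := (grid s).apply_symm_apply x
  rw [Prod.ext_iff]
  constructor
  · rw [← grid_fst s ((grid s).symm x), h]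
  · rw [← grid_snd s ((grid s).symm x), h]

/-- The column of entry `x` (grid coordinates rel. `s`) in the tableau `t`. -/
noncomputable def cg (x : Fin 4 × Fin 2) : Fin 2 :=
  ⟨(t.pos ((grid s).symm x)).2, collt t _⟩

lemma cg_grid (m : Fin 8) : cg s t (grid s m) = ⟨(t.pos m).2, collt t m⟩ := by
  apply Fin.ext
  show (t.pos ((grid s).symm (grid s m))).2 = (t.pos m).2
  rw [(grid s).symm_apply_apply]

lemma row_symm (hst : RowEquiv s t) (x : Fin 4 × Fin 2) :
    (t.pos ((grid s).symm x)).1 = (x.1 : ℕ) := by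
  rw [← hst ((grid s).symm x), pos_symm]

lemma cg_ne (hst : RowEquiv s t) (i : Fin 4) : cg s t (i, 0) ≠ cg s t (i, 1) := by
  intro heq
  have hpos : t.pos ((grid s).symm (i, 0)) = t.pos ((grid s).symm (i, 1)) := by
    rw [Prod.ext_iff]
    constructor
    · rw [row_symm s t hst, row_symm s t hst]
    · exact congrArg Fin.val heq
  have h2 := (grid s).symm.injective (t.inj hpos)
  rw [Prod.ext_iff] at h2
  have h3 : (0 : Fin 2) = 1 := h2.2
  exact absurd h3 (by decide)

/-- The flip pattern distinguishing `t` from `s`. -/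
noncomputable def Fof : Fin 4 → Bool := fun i => decide (cg s t (i, 0) = 1)

/-- The per-row column flip. -/
noncomputable def kap : Equiv.Perm (Fin 4 × Fin 2) :=
  Equiv.prodCongrRight (fun i => if Fof s t i then (Equiv.swap 0 1 : Equiv.Perm (Fin 2)) else 1)

lemma kap_fst (x : Fin 4 × Fin 2) : (kap s t x).1 = x.1 := rfl

lemma kap_kap (x : Fin 4 × Fin 2) : kap s t (kap s t x) = x := by
  obtain ⟨i, j⟩ := x
  show (i, _) = (i, j)
  by_cases hFi : Fof s t i
  · simp [kap, hFi]
  · simp [kap, hFi]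

lemma kap_inv : (kap s t)⁻¹ = kap s t := by
  rw [inv_eq_iff_mul_eq_one]
  exact Equiv.ext fun x => kap_kap s t x

lemma fin2_ne_one {a : Fin 2} (h : a ≠ 1) : a = 0 := by
  revert a h; decide
lemma fin2_ne_zero {a : Fin 2} (h : a ≠ 0) : a = 1 := by
  revert a h; decide
lemma fin2_cases (j : Fin 2) : j = 0 ∨ j = 1 := by revert j; decide

lemma cg_kap (hst : RowEquiv s t) (x : Fin 4 × Fin 2) : cg s t (kap s t x) = x.2 := by
  obtain ⟨i, j⟩ := x
  have hne := cg_ne s t hst i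
  by_cases hFi : Fof s t i
  · have h1 : cg s t (i, 0) = 1 := of_decide_eq_true hFi
    have h0 : cg s t (i, 1) = 0 := fin2_ne_one (fun hh => hne (h1.trans hh.symm))
    have hk : kap s t (i, j) = (i, Equiv.swap 0 1 j) := by simp [kap, hFi]
    rw [hk]
    rcases fin2_cases j with rfl | rfl
    · rw [show Equiv.swap (0 : Fin 2) 1 0 = 1 from Equiv.swap_apply_left 0 1, h0]
    · rw [show Equiv.swap (0 : Fin 2) 1 1 = 0 from Equiv.swap_apply_right 0 1, h1]
  · have h0 : cg s t (i, 0) = 0 := fin2_ne_one (fun hh => hFi (decide_eq_true hh))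
    have h1 : cg s t (i, 1) = 1 := fin2_ne_zero (fun hh => hne (h0.trans hh.symm))
    have hk : kap s t (i, j) = (i, j) := by simp [kap, hFi]
    rw [hk]
    rcases fin2_cases j with rfl | rfl
    · exact h0
    · exact h1

lemma kap_snd (hst : RowEquiv s t) (x : Fin 4 × Fin 2) :
    (kap s t x).2 = cg s t x := by
  have h := cg_kap s t hst (kap s t x)
  rw [kap_kap] at h
  exact h.symm

lemma kap_fix (hst : RowEquiv s t) (y : Fin 4 × Fin 2) :
    kap s t (y.1, cg s t y) = y := by
  have h1 : (y.1, cg s t y) = kap s t y := by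
    rw [Prod.ext_iff]
    exact ⟨(kap_fst s t y).symm, (kap_snd s t hst y).symm⟩
  rw [h1, kap_kap]

/-- The fibrewise column permutation attached to a pair of permutations of the rows. -/
def Phi (u : P4 × P4) : Equiv.Perm (Fin 4 × Fin 2) :=
  Equiv.prodCongrLeft (fun j : Fin 2 => if j = 0 then u.1 else u.2)

lemma Phi_apply (u : P4 × P4) (i : Fin 4) (j : Fin 2) :
    Phi u (i, j) = ((if j = 0 then u.1 else u.2) i, j) := rfl

lemma Phi_fst (u : P4 × P4) (x : Fin 4 × Fin 2) :
    (Phi u x).1 = (if x.2 = 0 then u.1 else u.2) x.1 := rfl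

lemma Phi_snd (u : P4 × P4) (x : Fin 4 × Fin 2) : (Phi u x).2 = x.2 := rfl

lemma Phi_inv_apply (u : P4 × P4) (i : Fin 4) (j : Fin 2) :
    (Phi u)⁻¹ (i, j) = ((if j = 0 then u.1 else u.2)⁻¹ i, j) := by
  apply (Phi u).injective
  rw [perm_apply_inv_self, Phi_apply, perm_apply_inv_self]

lemma sign_Phi (u : P4 × P4) : sign (Phi u) = sign u.1 * sign u.2 := by
  rw [Phi, Equiv.Perm.sign_prodCongrLeft, Fin.prod_univ_two]
  norm_num

/-- Transport of grid permutations to entry permutations. -/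
noncomputable def Psi (π : Equiv.Perm (Fin 4 × Fin 2)) : Equiv.Perm (Fin 8) :=
  ((grid s).symm).permCongr π

lemma Psi_apply (π : Equiv.Perm (Fin 4 × Fin 2)) (k : Fin 8) :
    Psi s π k = (grid s).symm (π (grid s k)) := by
  simp [Psi, Equiv.permCongr_apply]

lemma Psi_inv (π : Equiv.Perm (Fin 4 × Fin 2)) : (Psi s π)⁻¹ = Psi s π⁻¹ := by
  apply inv_eq_of_mul_eq_one_left
  refine Equiv.ext fun k => ?_
  simp [Equiv.Perm.mul_apply, Psi_apply]

lemma sign_Psi (π : Equiv.Perm (Fin 4 × Fin 2)) : sign (Psi s π) = sign π :=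
  Equiv.Perm.sign_permCongr _ _

lemma units_aba (a b : ℤˣ) : a * b * a = b := by
  rw [mul_comm a b, mul_assoc, Int.units_mul_self, mul_one]

lemma grid_snd_perm {σ : Equiv.Perm (Fin 8)} (hσ : σ ∈ colStab s) (m : Fin 8) :
    (grid s (σ m)).2 = (grid s m).2 := by
  rw [colStab, Finset.mem_filter] at hσ
  exact Fin.ext (hσ.2 m)

lemma cg_perm {τ : Equiv.Perm (Fin 8)} (hτ : τ ∈ colStab t) (m : Fin 8) :
    cg s t (grid s (τ m)) = cg s t (grid s m) := by
  rw [colStab, Finset.mem_filter] at hτ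
  rw [cg_grid, cg_grid]
  exact Fin.ext (hτ.2 m)

lemma mem_colStab_s (u : P4 × P4) : Psi s (Phi u) ∈ colStab s := by
  rw [colStab, Finset.mem_filter]
  refine ⟨Finset.mem_univ _, fun k => ?_⟩
  show (s.pos (Psi s (Phi u) k)).2 = (s.pos k).2
  rw [← grid_snd s (Psi s (Phi u) k), ← grid_snd s k]
  rw [Psi_apply, Equiv.apply_symm_apply]
  rfl

lemma mem_colStab_t (hst : RowEquiv s t) (v : P4 × P4) :
    Psi s (kap s t * Phi v * kap s t) ∈ colStab t := by
  rw [colStab, Finset.mem_filter]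
  refine ⟨Finset.mem_univ _, fun k => ?_⟩
  have key : ∀ m : Fin 8, (t.pos m).2 = (cg s t (grid s m) : ℕ) := by
    intro m; rw [cg_grid]
  rw [key, key]
  apply congrArg Fin.val
  rw [Psi_apply, Equiv.apply_symm_apply]
  rw [show (kap s t * Phi v * kap s t) (grid s k)
      = kap s t (Phi v (kap s t (grid s k))) from rfl]
  rw [cg_kap s t hst, Phi_snd, kap_snd s t hst]

/-- Extract the pair of row permutations from an element of `colStab s`. -/
noncomputable def extS (σ : Equiv.Perm (Fin 8)) : P4 × P4 :=
  (mkPerm (fun i => (grid s (σ ((grid s).symm (i, 0)))).1),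
   mkPerm (fun i => (grid s (σ ((grid s).symm (i, 1)))).1))

lemma extS_bij {σ : Equiv.Perm (Fin 8)} (hσ : σ ∈ colStab s) (j : Fin 2) :
    Function.Bijective (fun i => (grid s (σ ((grid s).symm (i, j)))).1) := by
  apply bij_of_inj
  intro a b hab
  simp only at hab
  have hfull : grid s (σ ((grid s).symm (a, j))) = grid s (σ ((grid s).symm (b, j))) := by
    rw [Prod.ext_iff]
    refine ⟨hab, ?_⟩
    rw [grid_snd_perm s hσ, grid_snd_perm s hσ, Equiv.apply_symm_apply, Equiv.apply_symm_apply]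
  have h2 := (grid s).symm.injective (σ.injective ((grid s).injective hfull))
  rw [Prod.ext_iff] at h2
  exact h2.1

lemma extS_left (u : P4 × P4) : extS s (Psi s (Phi u)) = u := by
  have h0 : (fun i => (grid s (Psi s (Phi u) ((grid s).symm (i, 0)))).1) = ⇑u.1 := by
    funext i
    rw [Psi_apply, Equiv.apply_symm_apply, Equiv.apply_symm_apply, Phi_apply]
    simp
  have h1 : (fun i => (grid s (Psi s (Phi u) ((grid s).symm (i, 1)))).1) = ⇑u.2 := by
    funext i
    rw [Psi_apply, Equiv.apply_symm_apply, Equiv.apply_symm_apply, Phi_apply]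
    simp
  rw [extS, h0, h1, mkPerm_coe, mkPerm_coe]

lemma extS_right {σ : Equiv.Perm (Fin 8)} (hσ : σ ∈ colStab s) :
    Psi s (Phi (extS s σ)) = σ := by
  refine Equiv.ext fun k => ?_
  rw [Psi_apply, Equiv.symm_apply_eq]
  have hsnd : (grid s (σ k)).2 = (grid s k).2 := grid_snd_perm s hσ k
  rw [Prod.ext_iff]
  constructor
  · rw [Phi_fst]
    by_cases hj : (grid s k).2 = 0
    · rw [if_pos hj]
      show mkPerm _ (grid s k).1 = _
      rw [mkPerm_apply (extS_bij s hσ 0)]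
      have : ((grid s k).1, (0 : Fin 2)) = grid s k := by
        rw [← hj]
      rw [this, Equiv.symm_apply_apply]
    · rw [if_neg hj]
      show mkPerm _ (grid s k).1 = _
      rw [mkPerm_apply (extS_bij s hσ 1)]
      have : ((grid s k).1, (1 : Fin 2)) = grid s k := by
        rw [← fin2_ne_zero hj]
      rw [this, Equiv.symm_apply_apply]
  · rw [Phi_snd]
    exact hsnd.symm

/-- Extract the pair of row permutations from an element of `colStab t`. -/
noncomputable def extT (τ : Equiv.Perm (Fin 8)) : P4 × P4 :=
  (mkPerm (fun i => (grid s (τ ((grid s).symm (kap s t (i, 0))))).1),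
   mkPerm (fun i => (grid s (τ ((grid s).symm (kap s t (i, 1))))).1))

lemma cg_inj_row (hst : RowEquiv s t) {a : Fin 4} {b b' : Fin 2}
    (hbb : cg s t (a, b) = cg s t (a, b')) : b = b' := by
  have hne := cg_ne s t hst a
  fin_cases b <;> fin_cases b' <;> simp_all

lemma extT_bij (hst : RowEquiv s t) {τ : Equiv.Perm (Fin 8)} (hτ : τ ∈ colStab t) (j : Fin 2) :
    Function.Bijective (fun i => (grid s (τ ((grid s).symm (kap s t (i, j))))).1) := by
  apply bij_of_inj
  intro a b hab
  simp only at hab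
  have hcg : ∀ c : Fin 4, cg s t (grid s (τ ((grid s).symm (kap s t (c, j))))) = j := by
    intro c
    rw [cg_perm s t hτ, Equiv.apply_symm_apply, cg_kap s t hst]
  have hfull : grid s (τ ((grid s).symm (kap s t (a, j))))
      = grid s (τ ((grid s).symm (kap s t (b, j)))) := by
    have hsnd := cg_inj_row s t hst (a := (grid s (τ ((grid s).symm (kap s t (a, j))))).1)
      (b := (grid s (τ ((grid s).symm (kap s t (a, j))))).2)
      (b' := (grid s (τ ((grid s).symm (kap s t (b, j))))).2) ?_
    · rw [Prod.ext_iff]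
      exact ⟨hab, hsnd⟩
    · have e1 := hcg a
      have e2 := hcg b
      rw [← Prod.mk.eta (p := grid s (τ ((grid s).symm (kap s t (a, j)))))] at e1
      rw [← Prod.mk.eta (p := grid s (τ ((grid s).symm (kap s t (b, j)))))] at e2
      rw [← hab] at e2
      rw [e1, e2]
  have h2 := (grid s).symm.injective (τ.injective ((grid s).injective hfull))
  have h3 := (kap s t).injective h2
  rw [Prod.ext_iff] at h3
  exact h3.1

lemma extT_left (hst : RowEquiv s t) (v : P4 × P4) :
    extT s t (Psi s (kap s t * Phi v * kap s t)) = v := by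
  have key : ∀ (j : Fin 2) (i : Fin 4),
      (grid s (Psi s (kap s t * Phi v * kap s t) ((grid s).symm (kap s t (i, j))))).1
        = (if j = 0 then v.1 else v.2) i := by
    intro j i
    rw [Psi_apply, Equiv.apply_symm_apply, Equiv.apply_symm_apply]
    rw [show (kap s t * Phi v * kap s t) (kap s t (i, j))
        = kap s t (Phi v (kap s t (kap s t (i, j)))) from rfl]
    rw [kap_kap, Phi_apply, kap_fst]
  have h0 : (fun i => (grid s (Psi s (kap s t * Phi v * kap s t)
      ((grid s).symm (kap s t (i, 0))))).1) = ⇑v.1 := by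
    funext i; rw [key 0 i]; simp
  have h1 : (fun i => (grid s (Psi s (kap s t * Phi v * kap s t)
      ((grid s).symm (kap s t (i, 1))))).1) = ⇑v.2 := by
    funext i; rw [key 1 i]; simp
  rw [extT, h0, h1, mkPerm_coe, mkPerm_coe]

lemma extT_right (hst : RowEquiv s t) {τ : Equiv.Perm (Fin 8)} (hτ : τ ∈ colStab t) :
    Psi s (kap s t * Phi (extT s t τ) * kap s t) = τ := by
  refine Equiv.ext fun k => ?_
  rw [Psi_apply, Equiv.symm_apply_eq]
  rw [show (kap s t * Phi (extT s t τ) * kap s t) (grid s k)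
      = kap s t (Phi (extT s t τ) (kap s t (grid s k))) from rfl]
  -- first compute Phi (extT τ) (kap (grid k)) = ((grid (τ k)).1, (kap (grid k)).2)
  have hmid : Phi (extT s t τ) (kap s t (grid s k))
      = ((grid s (τ k)).1, (kap s t (grid s k)).2) := by
    rw [Prod.ext_iff]
    constructor
    · rw [Phi_fst]
      by_cases hj : (kap s t (grid s k)).2 = 0
      · rw [if_pos hj]
        show mkPerm _ (kap s t (grid s k)).1 = _
        rw [mkPerm_apply (extT_bij s t hst hτ 0)]
        have he : ((kap s t (grid s k)).1, (0 : Fin 2)) = kap s t (grid s k) := by rw [← hj]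
        rw [he, kap_kap, Equiv.symm_apply_apply]
      · rw [if_neg hj]
        show mkPerm _ (kap s t (grid s k)).1 = _
        rw [mkPerm_apply (extT_bij s t hst hτ 1)]
        have he : ((kap s t (grid s k)).1, (1 : Fin 2)) = kap s t (grid s k) := by
          rw [← fin2_ne_zero hj]
        rw [he, kap_kap, Equiv.symm_apply_apply]
    · rw [Phi_snd]
  rw [hmid]
  have hcgeq : (kap s t (grid s k)).2 = cg s t (grid s (τ k)) := by
    rw [kap_snd s t hst, cg_perm s t hτ]
  rw [hcgeq]
  exact kap_fix s t hst (grid s (τ k))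

lemma match_iff (hst : RowEquiv s t) (u v : P4 × P4) :
    ((fun k => (s.pos ((Psi s (Phi u))⁻¹ k)).1)
        = fun k => (t.pos ((Psi s (kap s t * Phi v * kap s t))⁻¹ k)).1)
      ↔ Cond (Fof s t) u v := by
  have hL : ∀ k, (s.pos ((Psi s (Phi u))⁻¹ k)).1
      = (((Phi u)⁻¹ (grid s k)).1 : ℕ) := by
    intro k
    rw [Psi_inv, Psi_apply, pos_symm]
  have hR : ∀ k, (t.pos ((Psi s (kap s t * Phi v * kap s t))⁻¹ k)).1
      = (((Phi v)⁻¹ (kap s t (grid s k))).1 : ℕ) := by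
    intro k
    rw [Psi_inv, Psi_apply]
    rw [show (kap s t * Phi v * kap s t)⁻¹ = kap s t * (Phi v)⁻¹ * kap s t from by
      rw [mul_inv_rev, mul_inv_rev, kap_inv s t, mul_assoc]]
    rw [show (kap s t * (Phi v)⁻¹ * kap s t) (grid s k)
        = kap s t ((Phi v)⁻¹ (kap s t (grid s k))) from rfl]
    rw [row_symm s t hst, kap_fst]
  have comp : ∀ (i : Fin 4) (j : Fin 2),
      (((Phi u)⁻¹ (i, j)).1 = ((Phi v)⁻¹ (kap s t (i, j))).1) ↔
        (if j = 0 then (u.1⁻¹ i = if Fof s t i then v.2⁻¹ i else v.1⁻¹ i)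
          else (u.2⁻¹ i = if Fof s t i then v.1⁻¹ i else v.2⁻¹ i)) := by
    intro i j
    have hk : kap s t (i, j) = (i, (if Fof s t i then Equiv.swap 0 1 else 1) j) := rfl
    rw [hk, Phi_inv_apply, Phi_inv_apply]
    by_cases hF : Fof s t i <;> fin_cases j <;>
      simp [hF, Equiv.swap_apply_left, Equiv.swap_apply_right]
  constructor
  · intro hfun i
    have h0 := congrFun hfun ((grid s).symm (i, 0))
    have h1 := congrFun hfun ((grid s).symm (i, 1))
    rw [hL, hR, Equiv.apply_symm_apply] at h0 h1
    have h0' := (comp i 0).mp (Fin.ext h0)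
    have h1' := (comp i 1).mp (Fin.ext h1)
    rw [if_pos rfl] at h0'
    rw [if_neg (by decide : ¬(1 : Fin 2) = 0)] at h1'
    exact ⟨h0', h1'⟩
  · intro hc
    funext k
    rw [hL, hR]
    apply congrArg Fin.val
    rcases hx : grid s k with ⟨i, j⟩
    fin_cases j
    · exact (comp i 0).mpr (by rw [if_pos rfl]; exact (hc i).1)
    · exact (comp i 1).mpr (by rw [if_neg (by decide : ¬(1 : Fin 2) = 0)]; exact (hc i).2)

lemma tabloidInner_expand (A : Finset (Equiv.Perm (Fin 8))) (c : Equiv.Perm (Fin 8) → ℤ)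
    (u : Equiv.Perm (Fin 8) → (Fin 8 → ℕ)) (g : (Fin 8 → ℕ) →₀ ℤ) :
    tabloidInner (∑ σ ∈ A, c σ • Finsupp.single (u σ) 1) g = ∑ σ ∈ A, c σ * g (u σ) := by
  unfold tabloidInner
  rw [← Finsupp.sum_finset_sum_index (h := fun x a => a * g x) (fun a => zero_mul _)
      (fun a b₁ b₂ => add_mul b₁ b₂ _)]
  refine Finset.sum_congr rfl fun σ _ => ?_
  rw [Finsupp.smul_single, smul_eq_mul, mul_one]
  exact Finsupp.sum_single_index (h := fun x a => a * g x) (zero_mul _)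

lemma inner_formula (hst : RowEquiv s t) :
    tabloidInner (polytabloid s) (polytabloid t)
      = 24 * ((stabF (Fof s t)).card : ℤ) := by
  have hexp : tabloidInner (polytabloid s) (polytabloid t)
      = ∑ σ ∈ colStab s, ∑ τ ∈ colStab t,
          (if (fun k => (s.pos (σ⁻¹ k)).1) = (fun k => (t.pos (τ⁻¹ k)).1)
            then ((sign σ * sign τ : ℤˣ) : ℤ) else 0) := by
    unfold polytabloid
    rw [tabloidInner_expand]
    refine Finset.sum_congr rfl fun σ hσ => ?_
    rw [Finsupp.finset_sum_apply, Finset.mul_sum]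
    refine Finset.sum_congr rfl fun τ hτ => ?_
    rw [Finsupp.smul_single, smul_eq_mul, mul_one, Finsupp.single_apply]
    rw [mul_ite, mul_zero]
    refine if_congr eq_comm ?_ rfl
    rw [Units.val_mul]
  rw [hexp]
  have h1 : ∀ σ, (∑ τ ∈ colStab t,
      (if (fun k => (s.pos (σ⁻¹ k)).1) = (fun k => (t.pos (τ⁻¹ k)).1)
        then ((sign σ * sign τ : ℤˣ) : ℤ) else 0))
      = ∑ v : P4 × P4,
        (if (fun k => (s.pos (σ⁻¹ k)).1)
            = (fun k => (t.pos ((Psi s (kap s t * Phi v * kap s t))⁻¹ k)).1)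
          then ((sign σ * sign (Psi s (kap s t * Phi v * kap s t)) : ℤˣ) : ℤ) else 0) := by
    intro σ
    refine (Finset.sum_nbij' (i := fun v => Psi s (kap s t * Phi v * kap s t))
      (j := extT s t) ?_ ?_ ?_ ?_ ?_).symm
    · intro v _; exact mem_colStab_t s t hst v
    · intro τ _; exact Finset.mem_univ _
    · intro v _; exact extT_left s t hst v
    · intro τ hτ; exact extT_right s t hst hτ
    · intro v _; rfl
  rw [Finset.sum_congr rfl (fun σ _ => h1 σ)]
  have h2 : (∑ σ ∈ colStab s, ∑ v : P4 × P4,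
      (if (fun k => (s.pos (σ⁻¹ k)).1)
          = (fun k => (t.pos ((Psi s (kap s t * Phi v * kap s t))⁻¹ k)).1)
        then ((sign σ * sign (Psi s (kap s t * Phi v * kap s t)) : ℤˣ) : ℤ) else 0))
      = ∑ u : P4 × P4, ∑ v : P4 × P4,
        (if (fun k => (s.pos ((Psi s (Phi u))⁻¹ k)).1)
            = (fun k => (t.pos ((Psi s (kap s t * Phi v * kap s t))⁻¹ k)).1)
          then ((sign (Psi s (Phi u)) * sign (Psi s (kap s t * Phi v * kap s t)) : ℤˣ) : ℤ)
          else 0) := by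
    refine (Finset.sum_nbij' (i := fun u => Psi s (Phi u)) (j := extS s)
      ?_ ?_ ?_ ?_ ?_).symm
    · intro u _; exact mem_colStab_s s u
    · intro σ _; exact Finset.mem_univ _
    · intro u _; exact extS_left s u
    · intro σ hσ; exact extS_right s hσ
    · intro u _; rfl
  rw [h2]
  have h3 : ∀ u v : P4 × P4,
      (if (fun k => (s.pos ((Psi s (Phi u))⁻¹ k)).1)
          = (fun k => (t.pos ((Psi s (kap s t * Phi v * kap s t))⁻¹ k)).1)
        then ((sign (Psi s (Phi u)) * sign (Psi s (kap s t * Phi v * kap s t)) : ℤˣ) : ℤ)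
        else 0)
      = (if Cond (Fof s t) u v
          then ((sign u.1 * sign u.2 * (sign v.1 * sign v.2) : ℤˣ) : ℤ) else 0) := by
    intro u v
    have hsg : (sign (Psi s (Phi u)) * sign (Psi s (kap s t * Phi v * kap s t)) : ℤˣ)
        = sign u.1 * sign u.2 * (sign v.1 * sign v.2) := by
      rw [sign_Psi, sign_Psi, sign_Phi, map_mul, map_mul, sign_Phi]
      rw [show (sign (kap s t) * (sign v.1 * sign v.2) * sign (kap s t) : ℤˣ)
          = sign v.1 * sign v.2 from units_aba _ _]
    rw [hsg]
    exact if_congr (match_iff s t hst u v) rfl rfl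
  calc ∑ u : P4 × P4, ∑ v : P4 × P4,
        (if (fun k => (s.pos ((Psi s (Phi u))⁻¹ k)).1)
            = (fun k => (t.pos ((Psi s (kap s t * Phi v * kap s t))⁻¹ k)).1)
          then ((sign (Psi s (Phi u)) * sign (Psi s (kap s t * Phi v * kap s t)) : ℤˣ) : ℤ)
          else 0)
      = ∑ u : P4 × P4, ∑ v : P4 × P4,
          (if Cond (Fof s t) u v
            then ((sign u.1 * sign u.2 * (sign v.1 * sign v.2) : ℤˣ) : ℤ) else 0) := by
        refine Finset.sum_congr rfl fun u _ => Finset.sum_congr rfl fun v _ => h3 u v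
    _ = 24 * ((stabF (Fof s t)).card : ℤ) := core_sum (Fof s t)

lemma inner_divisible (hst : RowEquiv s t) :
    (16 : ℤ) ∣ tabloidInner (polytabloid s) (polytabloid t) := by
  rw [inner_formula s t hst]
  obtain ⟨m, hm⟩ := stabF_even (Fof s t)
  refine ⟨3 * m, ?_⟩
  rw [hm]; push_cast; ring

lemma inner_pos (hst : RowEquiv s t) :
    0 < tabloidInner (polytabloid s) (polytabloid t) := by
  rw [inner_formula s t hst]
  have h := stabF_pos (Fof s t)
  have : (0 : ℤ) < ((stabF (Fof s t)).card : ℤ) := by exact_mod_cast h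
  linarith

/-- An explicit standard tableau of shape `(2,2,2,2)`. -/
def s0 : YTableau 8 lam4 where
  pos k := (k.val / 2, k.val % 2)
  inj := by
    intro a b hab
    rw [Prod.ext_iff] at hab
    obtain ⟨h1, h2⟩ := hab
    apply Fin.ext
    simp only at h1 h2
    omega
  mem := fun k => by
    show k.val % 2 < lam4 (k.val / 2)
    have hk := k.isLt
    have h4 : k.val / 2 < 4 := by omega
    rw [show lam4 (k.val / 2) = 2 from if_pos h4]
    omega
  surj := by
    rintro ⟨i, j⟩ hc
    simp only at hc
    have hi : i < 4 := by
      by_contra hcon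
      rw [show lam4 i = 0 from if_neg hcon] at hc
      omega
    have hj : j < 2 := by rwa [show lam4 i = 2 from if_pos hi] at hc
    refine ⟨⟨2 * i + j, by omega⟩, ?_⟩
    rw [Prod.ext_iff]
    constructor
    · show (2 * i + j) / 2 = i; omega
    · show (2 * i + j) % 2 = j; omega

lemma s0_rowequiv : RowEquiv s0 s0 := fun _ => rfl

end Schaper2222

/-- `ν_2((2,2,2,2)) ≥ 4`: `16` divides `⟨e_s, e_t⟩` for all row-equivalent
`(2,2,2,2)`-tableaux. -/
theorem schaper_2222 :
    (∀ s t : YTableau 8 (fun i => if i < 4 then 2 else 0), RowEquiv s t →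
        (16 : ℤ) ∣ tabloidInner (polytabloid s) (polytabloid t)) ∧
      4 ≤ schaperNumber 2 8 (fun i => if i < 4 then 2 else 0) := by
  constructor
  · intro s t hst
    exact Schaper2222.inner_divisible s t hst
  · apply le_csSup
    · refine ⟨(tabloidInner (polytabloid Schaper2222.s0) (polytabloid Schaper2222.s0)).toNat,
        ?_⟩
      intro k hk
      have hd := hk Schaper2222.s0 Schaper2222.s0 Schaper2222.s0_rowequiv
      have hpos := Schaper2222.inner_pos Schaper2222.s0 Schaper2222.s0 Schaper2222.s0_rowequiv
      have hle : ((2 : ℕ) : ℤ) ^ k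
          ≤ tabloidInner (polytabloid Schaper2222.s0) (polytabloid Schaper2222.s0) :=
        Int.le_of_dvd hpos hd
      have h2 : (k : ℤ) < ((2 : ℕ) : ℤ) ^ k := by exact_mod_cast Nat.lt_two_pow_self (n := k)
      have h3 : (k : ℤ) ≤ tabloidInner (polytabloid Schaper2222.s0) (polytabloid Schaper2222.s0) :=
        le_trans h2.le hle
      exact (Int.le_toNat hpos.le).mpr h3
    · show ∀ s t : YTableau 8 (fun i => if i < 4 then 2 else 0), RowEquiv s t →
        ((2 : ℕ) : ℤ) ^ 4 ∣ tabloidInner (polytabloid s) (polytabloid t)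
      intro s t hst
      have : ((2 : ℕ) : ℤ) ^ 4 = 16 := by norm_num
      rw [this]
      exact Schaper2222.inner_divisible s t hst
end
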